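/- arXiv:1608.02220 — 7 statements merged into one kernel-verified Lean document; each statement's English description precedes it below -/
import Mathlib

section
/- An abelian group H is cotorsion (i.e., Ext(ℚ, H) = 0) if and only if for every sequence (a_n) in H there exists a sequence (b_n) in H such that b_n = a_n + (n+1)·b_{n+1} for all n ∈ ℕ. -/
open CategoryTheory

/-- An abelian group `A` is cotorsion if `Ext¹_ℤ(ℚ, A) = 0`. -/
def IsCotorsion (A : Type) [AddCommGroup A] : Prop :=
  Subsingleton (((Ext ℤ (ModuleCat ℤ) 1).obj (Opposite.op (ModuleCat.of ℤ ℚ))).obj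
    (ModuleCat.of ℤ A))

open Limits

noncomputable section CotorsionAux

namespace CotorsionAux

/-- The differential: `e n ↦ e n - (n+1) e (n+1)`. -/
def delta : (ℕ →₀ ℤ) →ₗ[ℤ] (ℕ →₀ ℤ) :=
  Finsupp.linearCombination ℤ (fun n => Finsupp.single n 1 - Finsupp.single (n+1) ((n : ℤ)+1))

/-- The augmentation: `e n ↦ 1/n!`. -/
def eps : (ℕ →₀ ℤ) →ₗ[ℤ] ℚ :=
  Finsupp.linearCombination ℤ (fun n => ((n.factorial : ℚ))⁻¹)

@[simp] lemma delta_single (n : ℕ) :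
    delta (Finsupp.single n 1) = Finsupp.single n 1 - Finsupp.single (n+1) ((n:ℤ)+1) := by
  simp [delta]

@[simp] lemma eps_single (n : ℕ) : eps (Finsupp.single n 1) = ((n.factorial : ℚ))⁻¹ := by
  simp [eps]

lemma eps_comp_delta : eps.comp delta = 0 := by
  apply Finsupp.lhom_ext
  intro n c
  simp only [LinearMap.comp_apply, LinearMap.zero_apply]
  have : delta (Finsupp.single n c) = c • delta (Finsupp.single n 1) := by
    rw [← LinearMap.map_smul]; simp [Finsupp.smul_single]
  rw [this, LinearMap.map_smul, delta_single, map_sub, eps_single]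
  have h1 : eps (Finsupp.single (n+1) ((n:ℤ)+1)) = ((n:ℚ)+1) * (((n+1).factorial : ℚ))⁻¹ := by
    have : Finsupp.single (n+1) ((n:ℤ)+1) = ((n:ℤ)+1) • Finsupp.single (n+1) (1:ℤ) := by
      simp [Finsupp.smul_single]
    rw [this, LinearMap.map_smul, eps_single, zsmul_eq_mul]
    push_cast
    ring
  rw [h1]
  have hfac : ((n+1).factorial : ℚ) = ((n:ℚ)+1) * (n.factorial : ℚ) := by
    rw [Nat.factorial_succ]; push_cast; ring
  have h2 : (((n+1).factorial : ℚ))⁻¹ = ((n:ℚ)+1)⁻¹ * ((n.factorial : ℚ))⁻¹ := by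
    rw [hfac, mul_inv]
  rw [h2]
  have hn : ((n:ℚ)+1) ≠ 0 := by positivity
  field_simp
  simp

/-- `P j k = ∏_{j ≤ i < k} (i+1) = k!/j!` for `j ≤ k`. -/
def P (j k : ℕ) : ℤ := ∏ i ∈ Finset.Ico j k, ((i : ℤ)+1)

lemma P_self (k : ℕ) : P k k = 1 := by simp [P]

lemma P_succ_bot {j k : ℕ} (h : j < k) : P j k = ((j : ℤ)+1) * P (j+1) k := by
  unfold P
  rw [Finset.prod_eq_prod_Ico_succ_bot h (fun i => ((i : ℤ)+1))]

lemma P_succ_top {j k : ℕ} (h : j ≤ k) : P j (k+1) = P j k * ((k : ℤ)+1) := by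
  unfold P
  rw [Finset.prod_Ico_succ_top h (fun i => ((i : ℤ)+1))]

lemma factorial_mul_P {j k : ℕ} (h : j ≤ k) :
    (j.factorial : ℤ) * P j k = (k.factorial : ℤ) := by
  induction k with
  | zero => interval_cases j; simp [P_self]
  | succ k ih =>
    rcases Nat.lt_succ_iff_lt_or_eq.mp (Nat.lt_succ_of_le h) with h' | h'
    · have h2 : j ≤ k := Nat.lt_succ_iff.mp h'
      rw [P_succ_top h2, ← mul_assoc, ih h2, Nat.factorial_succ]
      push_cast
      ring
    · subst h'; simp [P_self]

/-- Dual functionals detecting injectivity of `delta`. -/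
def L (k : ℕ) : (ℕ →₀ ℤ) →ₗ[ℤ] ℤ :=
  Finsupp.linearCombination ℤ (fun n => if n ≤ k then P n k else 0)

lemma L_comp_delta (k : ℕ) : (L k).comp delta = Finsupp.lapply k := by
  apply Finsupp.lhom_ext
  intro n c
  have hd : delta (Finsupp.single n c) = c • (Finsupp.single n 1 - Finsupp.single (n+1) ((n:ℤ)+1)) := by
    have hs : Finsupp.single n c = c • Finsupp.single n (1:ℤ) := by simp [Finsupp.smul_single]
    rw [hs, LinearMap.map_smul, delta_single]
  simp only [LinearMap.comp_apply, hd, LinearMap.map_smul, map_sub, Finsupp.lapply_apply,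
    Finsupp.single_apply]
  have h1 : L k (Finsupp.single n 1) = (if n ≤ k then P n k else 0) := by simp [L]
  have h2 : L k (Finsupp.single (n+1) ((n:ℤ)+1)) =
      ((n:ℤ)+1) * (if n+1 ≤ k then P (n+1) k else 0) := by
    have : Finsupp.single (n+1) ((n:ℤ)+1) = ((n:ℤ)+1) • Finsupp.single (n+1) (1:ℤ) := by
      simp [Finsupp.smul_single]
    rw [this, LinearMap.map_smul, smul_eq_mul]
    congr 1
    simp [L]
  rw [h1, h2]
  rcases lt_trichotomy n k with h | h | h
  · rw [if_pos h.le, if_pos (by omega : n + 1 ≤ k), if_neg h.ne, P_succ_bot h]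
    simp
  · subst h
    rw [if_pos le_rfl, if_neg (by omega), if_pos rfl, P_self]
    simp
  · rw [if_neg (by omega), if_neg (by omega), if_neg (by omega)]
    simp

lemma delta_injective : Function.Injective delta := by
  rw [← LinearMap.ker_eq_bot, LinearMap.ker_eq_bot']
  intro x hx
  ext k
  have := congrArg (L k) hx
  rw [← LinearMap.comp_apply, L_comp_delta] at this
  simpa using this

lemma single_sub_mem_range (N : ℕ) :
    ∀ j, j ≤ N → Finsupp.single j (1:ℤ) - P j N • Finsupp.single N (1:ℤ) ∈ LinearMap.range delta := by
  induction N with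
  | zero =>
    intro j hj
    interval_cases j
    simp [P_self]
  | succ N ih =>
    intro j hj
    rcases Nat.lt_succ_iff_lt_or_eq.mp (Nat.lt_succ_of_le hj) with h' | h'
    · have h2 : j ≤ N := Nat.lt_succ_iff.mp h'
      have mem1 := ih j h2
      have mem2 : P j N • delta (Finsupp.single N 1) ∈ LinearMap.range delta :=
        Submodule.smul_mem _ _ (LinearMap.mem_range_self _ _)
      have := Submodule.add_mem _ mem1 mem2
      convert this using 1
      rw [delta_single, P_succ_top h2]
      have : Finsupp.single (N+1) ((N:ℤ)+1) = ((N:ℤ)+1) • Finsupp.single (N+1) (1:ℤ) := by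
        simp [Finsupp.smul_single]
      rw [this, smul_sub, smul_smul, mul_comm]
      abel
    · subst h'
      simp [P_self]

lemma cast_P (j N : ℕ) (h : j ≤ N) :
    ((P j N : ℤ) : ℚ) = (N.factorial : ℚ) * ((j.factorial : ℚ))⁻¹ := by
  have h1 : ((j.factorial : ℚ)) * ((P j N : ℤ) : ℚ) = (N.factorial : ℚ) := by
    exact_mod_cast congrArg (fun z : ℤ => (z : ℚ)) (factorial_mul_P h)
  have hj : ((j.factorial : ℚ)) ≠ 0 := by positivity
  field_simp
  linear_combination h1

lemma mem_range_of_eps_eq_zero {x : ℕ →₀ ℤ} (hx : eps x = 0) :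
    x ∈ LinearMap.range delta := by
  set N := x.support.sup id with hN
  have hsupp : ∀ j ∈ x.support, j ≤ N := fun j hj => Finset.le_sup (f := id) hj
  have hxdecomp : x = ∑ j ∈ x.support, x j • Finsupp.single j (1:ℤ) := by
    conv_lhs => rw [← Finsupp.sum_single x]
    rw [Finsupp.sum]
    apply Finset.sum_congr rfl
    intro j _
    simp [Finsupp.smul_single]
  have key : x = (∑ j ∈ x.support, x j • (Finsupp.single j (1:ℤ) - P j N • Finsupp.single N 1))
      + (∑ j ∈ x.support, x j * P j N) • Finsupp.single N (1:ℤ) := by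
    rw [Finset.sum_smul, ← Finset.sum_add_distrib]
    conv_lhs => rw [hxdecomp]
    apply Finset.sum_congr rfl
    intro j _
    rw [smul_sub, smul_smul]
    abel
  have hc : (∑ j ∈ x.support, x j * P j N) = 0 := by
    have hQ : ((∑ j ∈ x.support, x j * P j N : ℤ) : ℚ)
        = (N.factorial : ℚ) * eps x := by
      rw [eps, Finsupp.linearCombination_apply, Finsupp.sum, Finset.mul_sum]
      push_cast
      apply Finset.sum_congr rfl
      intro j hj
      rw [cast_P j N (hsupp j hj), zsmul_eq_mul]
      ring
    rw [hx, mul_zero] at hQ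
    exact_mod_cast hQ
  rw [key, hc, zero_smul, add_zero]
  apply Submodule.sum_mem
  intro j hj
  exact Submodule.smul_mem _ _ (single_sub_mem_range N j (hsupp j hj))

lemma eps_surjective : Function.Surjective eps := by
  intro q
  have hden : (q.den : ℕ) ∣ q.den.factorial := Nat.dvd_factorial q.pos le_rfl
  refine ⟨Finsupp.single q.den (q.num * ((q.den.factorial / q.den : ℕ) : ℤ)), ?_⟩
  have : Finsupp.single q.den (q.num * ((q.den.factorial / q.den : ℕ) : ℤ))
      = (q.num * ((q.den.factorial / q.den : ℕ) : ℤ)) • Finsupp.single q.den (1:ℤ) := by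
    simp [Finsupp.smul_single]
  rw [this, LinearMap.map_smul, eps_single, zsmul_eq_mul]
  obtain ⟨m, hm⟩ := hden
  have hdiv : q.den.factorial / q.den = m := by rw [hm]; exact Nat.mul_div_cancel_left m q.pos
  rw [hdiv]
  have hden' : (q.den : ℚ) ≠ 0 := by exact_mod_cast q.den_nz
  have hm0 : (m : ℚ) ≠ 0 := by
    have hfac : (q.den.factorial : ℚ) ≠ 0 := by positivity
    intro h0
    apply hfac
    have : (q.den.factorial : ℚ) = (q.den : ℚ) * (m : ℚ) := by exact_mod_cast hm
    rw [this, h0, mul_zero]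
  have hmQ : (q.den.factorial : ℚ) = (q.den : ℚ) * (m : ℚ) := by exact_mod_cast hm
  push_cast
  rw [hmQ]
  rw [show ((q.den : ℚ) * (m : ℚ))⁻¹ = (q.den : ℚ)⁻¹ * (m : ℚ)⁻¹ from mul_inv _ _]
  have : (q.num : ℚ) * (m : ℚ) * ((q.den : ℚ)⁻¹ * (m : ℚ)⁻¹)
      = (q.num : ℚ) / (q.den : ℚ) := by
    field_simp
  rw [this]
  exact Rat.num_div_den q

section Complex

abbrev Qm : ModuleCat ℤ := ModuleCat.of ℤ ℚ
abbrev Fm : ModuleCat ℤ := ModuleCat.of ℤ (ℕ →₀ ℤ)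
abbrev Zm : ModuleCat ℤ := ModuleCat.of ℤ PUnit

def Xfun : ℕ → ModuleCat ℤ
  | 0 => Fm
  | 1 => Fm
  | _ + 2 => Zm

def deltaHom : Fm ⟶ Fm := ModuleCat.ofHom delta
def epsHom : Fm ⟶ Qm := ModuleCat.ofHom eps

def dfun : ∀ n : ℕ, Xfun (n + 1) ⟶ Xfun n
  | 0 => deltaHom
  | _ + 1 => 0

/-- The projective resolution complex `⋯ → 0 → F → F` of `ℚ`. -/
def cx : ChainComplex (ModuleCat ℤ) ℕ :=
  ChainComplex.of Xfun dfun (fun _ => zero_comp)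

lemma cx_d10 : cx.d 1 0 = deltaHom := ChainComplex.of_d Xfun dfun 0

lemma cx_d21 : cx.d 2 1 = 0 := ChainComplex.of_d Xfun dfun 1

lemma projective_Xfun (n : ℕ) : Projective (Xfun n) := by
  match n with
  | 0 => exact ModuleCat.projective_of_free (M := Fm) Finsupp.basisSingleOne
  | 1 => exact ModuleCat.projective_of_free (M := Fm) Finsupp.basisSingleOne
  | n + 2 => exact (ModuleCat.isZero_of_subsingleton Zm).projective

lemma d10_eps : cx.d 1 0 ≫ epsHom = 0 := by
  rw [cx_d10]
  exact ModuleCat.hom_ext eps_comp_delta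

/-- The augmentation map to `ℚ[0]`. -/
def pi : cx ⟶ (ChainComplex.single₀ (ModuleCat ℤ)).obj Qm :=
  (ChainComplex.toSingle₀Equiv cx Qm).symm ⟨epsHom, d10_eps⟩

lemma pi_f0 : pi.f 0 = epsHom := ChainComplex.toSingle₀Equiv_symm_apply_f_zero _ _

lemma cx_exactAt (n : ℕ) : cx.ExactAt (n + 1) := by
  rw [HomologicalComplex.exactAt_iff' _ (n+2) (n+1) n (by simp) (by simp)]
  match n with
  | 0 =>
    rw [ShortComplex.moduleCat_exact_iff]
    intro x hx
    refine ⟨0, ?_⟩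
    have hx0 : x = 0 := by
      apply delta_injective
      have : cx.d 1 0 x = 0 := hx
      rw [cx_d10] at this
      exact this.trans (map_zero delta).symm
    rw [hx0, map_zero]
  | n + 1 =>
    exact ShortComplex.exact_of_isZero_X₂ _
      (@ModuleCat.isZero_of_subsingleton ℤ _ _ (inferInstanceAs (Subsingleton PUnit)))

/-- `ℚ` is the cokernel of `delta`, as an `IsColimit` statement. -/
def cokerColimit {M N Q : ModuleCat ℤ} (f : M ⟶ N) (g : N ⟶ Q) (w : f ≫ g = 0)
    (hsurj : Function.Surjective g) (hker : ∀ y, g y = 0 → ∃ x, f x = y) :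
    IsColimit (CokernelCofork.ofπ g w) := by
  have : Epi g := (ModuleCat.epi_iff_surjective g).mpr hsurj
  have hex : (ShortComplex.mk f g w).Exact := (ShortComplex.moduleCat_exact_iff _).mpr hker
  exact hex.gIsCokernel

lemma quasiIsoAt_pi_zero : QuasiIsoAt pi 0 := by
  rw [ChainComplex.quasiIsoAt₀_iff]
  have hg₁ : (cx.sc' 1 0 0).g = 0 := cx.shape 0 0 (by simp)
  have hg₂ : (((ChainComplex.single₀ (ModuleCat ℤ)).obj Qm).sc' 1 0 0).g = 0 :=
    ((ChainComplex.single₀ (ModuleCat ℤ)).obj Qm).shape 0 0 (by simp)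
  have hf₂ : (((ChainComplex.single₀ (ModuleCat ℤ)).obj Qm).sc' 1 0 0).f = 0 :=
    HomologicalComplex.single_obj_d (ComplexShape.down ℕ) 0 Qm 1 0
  have w₁ : (cx.sc' 1 0 0).f ≫ epsHom = 0 := d10_eps
  have hker : ∀ y, epsHom y = 0 → ∃ x, (cx.sc' 1 0 0).f x = y := by
    intro y hy
    obtain ⟨x, hx⟩ := mem_range_of_eps_eq_zero (x := y) hy
    refine ⟨x, ?_⟩
    have : (cx.sc' 1 0 0).f = deltaHom := cx_d10
    rw [this]
    exact hx
  have hc₁ : IsColimit (CokernelCofork.ofπ epsHom w₁) :=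
    cokerColimit _ _ w₁ eps_surjective hker
  have hc₂ : IsColimit (CokernelCofork.ofπ (𝟙 _)
      (show (((ChainComplex.single₀ (ModuleCat ℤ)).obj Qm).sc' 1 0 0).f ≫ 𝟙 _ = 0 by
        rw [hf₂, zero_comp])) :=
    CokernelCofork.IsColimit.ofId _ hf₂
  have comm : ((HomologicalComplex.shortComplexFunctor' (ModuleCat ℤ) _ 1 0 0).map pi).τ₂ ≫ 𝟙 _
      = epsHom ≫ 𝟙 Qm := by
    simp only [Category.comp_id]
    exact pi_f0
  let γ := ShortComplex.RightHomologyMapData.ofIsColimitCokernelCofork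
    ((HomologicalComplex.shortComplexFunctor' (ModuleCat ℤ) _ 1 0 0).map pi)
    hg₁ _ hc₁ hg₂ _ hc₂ (𝟙 Qm) comm
  rw [γ.quasiIso_iff]
  exact inferInstanceAs (IsIso (𝟙 Qm))

instance : QuasiIso pi := ⟨fun n => by
  match n with
  | 0 => exact quasiIsoAt_pi_zero
  | n + 1 =>
    rw [quasiIsoAt_iff_exactAt' pi (n+1) (ChainComplex.exactAt_succ_single_obj Qm n)]
    exact cx_exactAt n⟩

/-- The explicit projective resolution of `ℚ`. -/
def resQ : CategoryTheory.ProjectiveResolution Qm where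
  complex := cx
  projective := projective_Xfun
  π := pi

end Complex

section Main

abbrev Hm (H : Type) [AddCommGroup H] : ModuleCat ℤ := ModuleCat.of ℤ H

lemma subsingleton_of_isZero {M : ModuleCat ℤ} (h : IsZero M) : Subsingleton M := by
  have e : M ≅ ModuleCat.of ℤ PUnit := h.iso (ModuleCat.isZero_of_subsingleton _)
  have eq : M ≃ PUnit := ((forget (ModuleCat ℤ)).mapIso e).toEquiv
  exact eq.subsingleton

variable (H : Type) [AddCommGroup H]

lemma subsingleton_homology_iff :
    Subsingleton ((cx.linearYonedaObj ℤ (Hm H)).homology 1) ↔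
      ∀ a' : Fm ⟶ Hm H, ∃ b' : Fm ⟶ Hm H, deltaHom ≫ b' = a' := by
  have hsub : Subsingleton ((cx.linearYonedaObj ℤ (Hm H)).homology 1) ↔
      IsZero ((cx.linearYonedaObj ℤ (Hm H)).homology 1) := by
    constructor
    · intro h
      exact @ModuleCat.isZero_of_subsingleton ℤ _ _ h
    · exact subsingleton_of_isZero
  rw [hsub, ← HomologicalComplex.exactAt_iff_isZero_homology,
    HomologicalComplex.exactAt_iff' (cx.linearYonedaObj ℤ (Hm H)) 0 1 2
      (CochainComplex.prev_nat_succ 0) (CochainComplex.next ℕ 1),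
    ShortComplex.moduleCat_exact_iff]
  have hsub2 : Subsingleton (((cx.linearYonedaObj ℤ (Hm H)).sc' 0 1 2).X₃) := by
    constructor
    intro f g
    apply ModuleCat.hom_ext
    apply LinearMap.ext
    intro x
    have hx : x = 0 := Subsingleton.elim (α := PUnit) _ _
    rw [hx, map_zero, map_zero]
  constructor
  · intro h a'
    obtain ⟨b', hb⟩ := h a' (@Subsingleton.elim _ hsub2 _ _)
    refine ⟨b', ?_⟩
    have hfb : ((cx.linearYonedaObj ℤ (Hm H)).sc' 0 1 2).f b' = cx.d 1 0 ≫ b' := rfl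
    rw [hfb, cx_d10] at hb
    exact hb
  · intro h x _
    obtain ⟨b', hb⟩ := h x
    refine ⟨b', ?_⟩
    have hfb : ((cx.linearYonedaObj ℤ (Hm H)).sc' 0 1 2).f b' = cx.d 1 0 ≫ b' := rfl
    rw [hfb, cx_d10]
    exact hb

lemma lhom_ext_one {M : Type*} [AddCommGroup M] [Module ℤ M]
    {f g : (ℕ →₀ ℤ) →ₗ[ℤ] M} (h : ∀ n, f (Finsupp.single n 1) = g (Finsupp.single n 1)) :
    f = g := by
  apply Finsupp.lhom_ext
  intro n c
  have hs : Finsupp.single n c = c • Finsupp.single n (1:ℤ) := by simp [Finsupp.smul_single]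
  rw [hs, LinearMap.map_smul, LinearMap.map_smul, h]

lemma smul_convert (n : ℕ) (x : H) : ((n : ℤ)+1) • x = (n+1) • x := by
  rw [show ((n : ℤ)+1) = ((n+1 : ℕ) : ℤ) by push_cast; ring, natCast_zsmul]

lemma comp_delta_apply (b' : (ℕ →₀ ℤ) →ₗ[ℤ] H) (n : ℕ) :
    (b'.comp delta) (Finsupp.single n 1)
      = b' (Finsupp.single n 1) - ((n : ℤ)+1) • b' (Finsupp.single (n+1) 1) := by
  rw [LinearMap.comp_apply, delta_single, map_sub]
  congr 1
  have hs : Finsupp.single (n+1) ((n:ℤ)+1) = ((n:ℤ)+1) • Finsupp.single (n+1) (1:ℤ) := by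
    simp [Finsupp.smul_single]
  rw [hs, LinearMap.map_smul]

lemma solvable_iff :
    (∀ a' : (ℕ →₀ ℤ) →ₗ[ℤ] H, ∃ b' : (ℕ →₀ ℤ) →ₗ[ℤ] H, b'.comp delta = a') ↔
      ∀ a : ℕ → H, ∃ b : ℕ → H, ∀ n : ℕ, b n = a n + (n + 1) • b (n + 1) := by
  constructor
  · intro h a
    obtain ⟨b', hb⟩ := h (Finsupp.linearCombination ℤ a)
    refine ⟨fun n => b' (Finsupp.single n 1), fun n => ?_⟩
    have key := LinearMap.congr_fun hb (Finsupp.single n (1:ℤ))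
    rw [comp_delta_apply, Finsupp.linearCombination_single, one_smul] at key
    have := sub_eq_iff_eq_add.mp key
    show b' (Finsupp.single n 1) = a n + (n+1) • b' (Finsupp.single (n+1) 1)
    rw [← smul_convert]
    exact this
  · intro h a'
    obtain ⟨b, hb⟩ := h (fun n => a' (Finsupp.single n 1))
    refine ⟨Finsupp.linearCombination ℤ b, ?_⟩
    apply lhom_ext_one
    intro n
    rw [comp_delta_apply, Finsupp.linearCombination_single, one_smul,
      Finsupp.linearCombination_single, one_smul, smul_convert, hb n]
    abel

lemma hom_solvable_iff :
    (∀ a' : Fm ⟶ Hm H, ∃ b' : Fm ⟶ Hm H, deltaHom ≫ b' = a') ↔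
      (∀ a' : (ℕ →₀ ℤ) →ₗ[ℤ] H, ∃ b' : (ℕ →₀ ℤ) →ₗ[ℤ] H, b'.comp delta = a') := by
  constructor
  · intro h a'
    obtain ⟨b', hb⟩ := h (ModuleCat.ofHom a')
    exact ⟨b'.hom, congrArg ModuleCat.Hom.hom hb⟩
  · intro h a'
    obtain ⟨b', hb⟩ := h a'.hom
    exact ⟨ModuleCat.ofHom b', ModuleCat.hom_ext hb⟩

end Main

end CotorsionAux


/-- `H` is cotorsion iff every system of equations `b n = a n + (n+1) • b (n+1)` is solvable. -/
theorem stmt_1 (H : Type) [AddCommGroup H] :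
    IsCotorsion H ↔
      ∀ a : ℕ → H, ∃ b : ℕ → H, ∀ n : ℕ, b n = a n + (n + 1) • b (n + 1) := by
  have e := CotorsionAux.resQ.isoExt (R := ℤ) 1 (CotorsionAux.Hm H)
  have hsub : IsCotorsion H ↔
      Subsingleton ((CotorsionAux.cx.linearYonedaObj ℤ (CotorsionAux.Hm H)).homology 1) := by
    unfold IsCotorsion
    constructor
    · intro h
      exact CotorsionAux.subsingleton_of_isZero
        ((@ModuleCat.isZero_of_subsingleton ℤ _ _ h).of_iso e.symm)
    · intro h
      exact CotorsionAux.subsingleton_of_isZero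
        ((@ModuleCat.isZero_of_subsingleton ℤ _ _ h).of_iso e)
  rw [hsub, CotorsionAux.subsingleton_homology_iff, CotorsionAux.hom_solvable_iff,
    CotorsionAux.solvable_iff]
end CotorsionAux
end

section
/- For any abelian group H, the group Ext(ℚ, H) is isomorphic to lim¹ of the tower ⋯ →(·3) H →(·2) H →(·1) H, where the map from stage n+1 to stage n is multiplication by n+1. -/
open CategoryTheory

/-- The map `∂ : ∏ₙ H → ∏ₙ H`, `(a_n) ↦ (a_n − (n+1)·a_{n+1})`, whose cokernel is
`lim¹` of the tower `⋯ →(·3) H →(·2) H →(·1) H`. -/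
def del (H : Type) [AddCommGroup H] : (ℕ → H) →+ (ℕ → H) :=
  AddMonoidHom.mk' (fun a n => a n - ((n : ℤ) + 1) • a (n + 1)) (by
    intro a b
    funext n
    simp [smul_add]
    abel)

open Limits
open Finsupp LinearMap

noncomputable def dd : (ℕ →₀ ℤ) →ₗ[ℤ] (ℕ →₀ ℤ) :=
  Finsupp.lsum ℤ fun n =>
    LinearMap.toSpanSingleton ℤ _ (Finsupp.single n 1 - ((n : ℤ) + 1) • Finsupp.single (n + 1) 1)

noncomputable def eps : (ℕ →₀ ℤ) →ₗ[ℤ] ℚ :=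
  Finsupp.lsum ℤ fun n => LinearMap.toSpanSingleton ℤ ℚ (1 / n.factorial)

lemma dd_single (n : ℕ) (c : ℤ) :
    dd (Finsupp.single n c) = Finsupp.single n c - Finsupp.single (n+1) (((n:ℤ)+1) * c) := by
  rw [dd, Finsupp.lsum_single, toSpanSingleton_apply, smul_sub, smul_smul,
    Finsupp.smul_single', Finsupp.smul_single', mul_one]
  ring_nf

lemma eps_single (n : ℕ) (c : ℤ) : eps (Finsupp.single n c) = c / n.factorial := by
  rw [eps, Finsupp.lsum_single, toSpanSingleton_apply, zsmul_eq_mul]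
  ring

lemma dd_apply_zero (x : ℕ →₀ ℤ) : dd x 0 = x 0 := by
  induction x using Finsupp.induction_linear with
  | zero => simp
  | add a b ha hb => simp [ha, hb]
  | single m c => simp [dd_single, Finsupp.single_apply]

lemma dd_apply_succ (x : ℕ →₀ ℤ) (k : ℕ) :
    dd x (k+1) = x (k+1) - ((k:ℤ)+1) * x k := by
  induction x using Finsupp.induction_linear with
  | zero => simp
  | add a b ha hb => simp [ha, hb]; ring
  | single m c =>
    simp only [dd_single, Finsupp.sub_apply, Finsupp.single_apply]
    rcases eq_or_ne m k with rfl | hm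
    · simp
    · have h1 : ¬ (m + 1 = k + 1) := by omega
      simp [hm, h1]

lemma dd_inj : Function.Injective dd := by
  rw [← LinearMap.ker_eq_bot, LinearMap.ker_eq_bot']
  intro x hx
  ext k
  induction k with
  | zero => simpa using (dd_apply_zero x).symm.trans (by rw [hx]; rfl)
  | succ k ih =>
    have h := (dd_apply_succ x k).symm.trans (by rw [hx]; rfl : dd x (k+1) = 0)
    simp only [Finsupp.coe_zero, Pi.zero_apply] at ih ⊢
    rw [ih, mul_zero, sub_zero] at h
    exact h.symm ▸ rfl

lemma eps_surj : Function.Surjective eps := by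
  intro q
  refine ⟨Finsupp.single q.den (q.num * (q.den - 1).factorial), ?_⟩
  rw [eps_single]
  have hd : q.den = (q.den - 1) + 1 := (Nat.succ_pred_eq_of_pos q.pos).symm
  rw [hd, Nat.factorial_succ, ← hd]
  have h1 : ((q.den - 1 : ℕ).factorial : ℚ) ≠ 0 := by positivity
  have h2 : (q.den : ℚ) ≠ 0 := by positivity
  rw [div_eq_iff (by push_cast; positivity)]
  push_cast [← hd]
  have hq : (q.num : ℚ) = q * q.den := by
    conv_rhs => enter [1]; rw [← Rat.num_div_den q]
    rw [div_mul_cancel₀ _ h2]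
  rw [hq]
  ring

lemma eps_dd : eps.comp dd = 0 := by
  apply Finsupp.lhom_ext
  intro n c
  simp only [LinearMap.comp_apply, LinearMap.zero_apply, dd_single, map_sub, eps_single]
  rw [Nat.factorial_succ]
  push_cast
  rw [sub_eq_zero, div_eq_div_iff (by positivity) (by positivity)]
  ring

lemma prod_Ioc_mul_factorial (n N : ℕ) (h : n ≤ N) :
    (∏ k ∈ Finset.Ioc n N, k) * n.factorial = N.factorial := by
  induction N, h using Nat.le_induction with
  | base => simp
  | succ N hN ih =>
    rw [Finset.prod_Ioc_succ_top (by omega), Nat.factorial_succ, mul_comm _ (N+1), mul_assoc, ih]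

lemma chainLem (n N : ℕ) (h : n ≤ N) (c : ℤ) :
    Finsupp.single n c - Finsupp.single N (c * ∏ k ∈ Finset.Ioc n N, (k : ℤ)) ∈
      LinearMap.range dd := by
  induction N, h using Nat.le_induction with
  | base => simp
  | succ N hN ih =>
    have h2 : Finsupp.single N (c * ∏ k ∈ Finset.Ioc n N, (k : ℤ)) -
        Finsupp.single (N+1) (c * ∏ k ∈ Finset.Ioc n (N+1), (k : ℤ)) ∈ LinearMap.range dd := by
      refine ⟨Finsupp.single N (c * ∏ k ∈ Finset.Ioc n N, (k : ℤ)), ?_⟩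
      rw [dd_single, Finset.prod_Ioc_succ_top (by omega)]
      push_cast
      ring_nf
    have := Submodule.add_mem _ ih h2
    simpa using this

lemma ker_eps_le : LinearMap.ker eps ≤ LinearMap.range dd := by
  intro x hx
  rw [LinearMap.mem_ker] at hx
  set N := (x.support.sup id) + 1 with hN
  have hle : ∀ n ∈ x.support, n ≤ N := fun n hn => by
    have h := Finset.le_sup (f := id) hn; rw [id_eq] at h; omega
  -- the total coefficient at N vanishes
  have key : ∑ n ∈ x.support, x n * ∏ k ∈ Finset.Ioc n N, (k : ℤ) = 0 := by
    have hq : ((∑ n ∈ x.support, x n * ∏ k ∈ Finset.Ioc n N, (k : ℤ) : ℤ) : ℚ) =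
        N.factorial * eps x := by
      have hex : eps x = ∑ n ∈ x.support, (x n : ℚ) / n.factorial := by
        conv_lhs => rw [← Finsupp.sum_single x]
        rw [Finsupp.sum, map_sum]
        exact Finset.sum_congr rfl fun n _ => eps_single n (x n)
      rw [hex, Finset.mul_sum]
      push_cast
      refine Finset.sum_congr rfl fun n hn => ?_
      have hfac : ((∏ k ∈ Finset.Ioc n N, k) * n.factorial : ℕ) = N.factorial :=
        prod_Ioc_mul_factorial n N (hle n hn)
      have : ((∏ k ∈ Finset.Ioc n N, (k:ℚ))) * n.factorial = N.factorial := by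
        have := congrArg (Nat.cast : ℕ → ℚ) hfac
        push_cast at this
        exact this
      rw [div_eq_mul_inv, eq_comm]
      field_simp
      rw [← this]
      ring
    rw [hx, mul_zero] at hq
    exact_mod_cast hq
  have hxsum : x = ∑ n ∈ x.support, (Finsupp.single n (x n)
      - Finsupp.single N (x n * ∏ k ∈ Finset.Ioc n N, (k : ℤ))) := by
    rw [Finset.sum_sub_distrib, ← Finsupp.single_finset_sum, key, Finsupp.single_zero, sub_zero]
    exact (Finsupp.sum_single x).symm
  rw [hxsum]
  exact Submodule.sum_mem _ fun n hn => chainLem n N (hle n hn) (x n)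


noncomputable section

abbrev Mc : ModuleCat ℤ := ModuleCat.of ℤ (ℕ →₀ ℤ)
abbrev Pc : ModuleCat ℤ := ModuleCat.of ℤ PUnit

def XF : ℕ → ModuleCat ℤ
  | 0 => Mc
  | 1 => Mc
  | _ + 2 => Pc

def dF : ∀ n : ℕ, XF (n + 1) ⟶ XF n
  | 0 => ModuleCat.ofHom dd
  | _ + 1 => 0

def Cplx : ChainComplex (ModuleCat ℤ) ℕ :=
  ChainComplex.of XF dF (fun n => by
    show dF (n + 1) ≫ dF n = 0
    show (0 : XF (n+2) ⟶ XF (n+1)) ≫ dF n = 0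
    rw [Limits.zero_comp])

instance cplx_projective (n : ℕ) : Projective (Cplx.X n) := by
  match n with
  | 0 => exact ModuleCat.projective_of_free (M := Mc) Finsupp.basisSingleOne
  | 1 => exact ModuleCat.projective_of_free (M := Mc) Finsupp.basisSingleOne
  | (n+2) => exact ModuleCat.projective_of_free (M := Pc) (Module.Basis.empty (ι := Empty) _)

lemma Cplx_d10 : Cplx.d 1 0 = ModuleCat.ofHom dd := ChainComplex.of_d XF dF 0

lemma Cplx_d21 : Cplx.d 2 1 = 0 := ChainComplex.of_d XF dF 1

lemma Cplx_exactAt_succ (n : ℕ) : Cplx.ExactAt (n + 1) := by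
  rw [HomologicalComplex.exactAt_iff' _ (n + 2) (n + 1) n (by simp) (by simp)]
  match n with
  | 0 =>
    rw [ShortComplex.exact_iff_mono _ (by exact Cplx_d21)]
    show Mono (Cplx.d 1 0)
    rw [ModuleCat.mono_iff_injective, Cplx_d10]
    exact dd_inj
  | (n+1) =>
    exact ShortComplex.exact_of_isZero_X₂ _ (ModuleCat.isZero_of_subsingleton Pc)

def epsHom : Mc ⟶ ModuleCat.of ℤ ℚ := ModuleCat.ofHom eps

lemma dd_epsHom : Cplx.d 1 0 ≫ epsHom = 0 := by
  exact ModuleCat.hom_ext eps_dd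

def theπ : Cplx ⟶ (ChainComplex.single₀ (ModuleCat ℤ)).obj (ModuleCat.of ℤ ℚ) :=
  (ChainComplex.toSingle₀Equiv _ _).symm ⟨epsHom, dd_epsHom⟩

lemma theπ_f0 : theπ.f 0 = epsHom := by
  rfl

def theRes : ProjectiveResolution (ModuleCat.of ℤ ℚ) where
  complex := Cplx
  π := theπ
  quasiIso := ⟨fun n => by
    cases n with
    | zero =>
      rw [ChainComplex.quasiIsoAt₀_iff, ShortComplex.quasiIso_iff_of_zeros']
      · refine (ShortComplex.exact_and_epi_g_iff_of_iso
          (S₂ := ShortComplex.mk (Cplx.d 1 0) epsHom dd_epsHom)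
          (ShortComplex.isoMk (Iso.refl _) (Iso.refl _) (Iso.refl _)
            (by simp) (by simp [theπ_f0]; rfl))).2 ⟨?_, ?_⟩
        · rw [ShortComplex.moduleCat_exact_iff_ker_sub_range]
          intro x hx
          exact ker_eps_le hx
        · rw [ModuleCat.epi_iff_surjective]
          exact eps_surj
      all_goals rfl
    | succ n =>
      rw [quasiIsoAt_iff_exactAt']
      · exact Cplx_exactAt_succ n
      · apply ChainComplex.exactAt_succ_single_obj⟩

variable (H : Type) [AddCommGroup H]

def KK : CochainComplex (ModuleCat ℤ) ℕ := Cplx.linearYonedaObj ℤ (ModuleCat.of ℤ H)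

lemma KK_d01_apply (f : (KK H).X 0) : (KK H).d 0 1 f = Cplx.d 1 0 ≫ f := by
  rfl


def eAdd : (Mc ⟶ ModuleCat.of ℤ H) ≃+ (ℕ → H) where
  toFun f n := f (Finsupp.single n 1)
  invFun a := ModuleCat.ofHom (Finsupp.lsum ℤ fun n => LinearMap.toSpanSingleton ℤ H (a n) : _ →ₗ[ℤ] _)
  left_inv f := by
    refine ModuleCat.hom_ext (Finsupp.lhom_ext fun n c => ?_)
    show (Finsupp.lsum ℤ _) (Finsupp.single n c) = _
    rw [Finsupp.lsum_single, LinearMap.toSpanSingleton_apply, ← map_zsmul f.hom,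
      Finsupp.smul_single', mul_one]
  right_inv a := by
    funext n
    show (Finsupp.lsum ℤ _) (Finsupp.single n 1) = a n
    rw [Finsupp.lsum_single, LinearMap.toSpanSingleton_apply, one_smul]
  map_add' f g := rfl

lemma eAdd_d (f : Mc ⟶ ModuleCat.of ℤ H) :
    eAdd H ((KK H).d 0 1 f) = del H (eAdd H f) := by
  funext n
  show f (Cplx.d 1 0 (Finsupp.single n 1)) = _
  rw [Cplx_d10]
  show f (dd (Finsupp.single n 1)) = _
  rw [dd_single, map_sub]
  have h1 : Finsupp.single (n+1) (((n:ℤ)+1) * 1) = ((n:ℤ)+1) • Finsupp.single (n+1) (1:ℤ) := by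
    rw [Finsupp.smul_single', mul_one]
  rw [h1, map_zsmul]
  rfl

lemma eAdd_surj : Function.Surjective (eAdd H) := (eAdd H).surjective

def theQuotEquiv :
    ((KK H).X 1 ⧸ LinearMap.range ((KK H).d 0 1).hom) ≃+ ((ℕ → H) ⧸ (del H).range) := by
  refine AddEquiv.ofBijective
    (Submodule.liftQ (LinearMap.range ((KK H).d 0 1).hom)
      (((QuotientAddGroup.mk' (del H).range).comp (eAdd H).toAddMonoidHom).toIntLinearMap)
      ?_).toAddMonoidHom ⟨?_, ?_⟩
  · rintro _ ⟨g, rfl⟩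
    show QuotientAddGroup.mk' (del H).range (eAdd H ((KK H).d 0 1 g)) = 0
    erw [eAdd_d, QuotientAddGroup.mk'_apply, QuotientAddGroup.eq_zero_iff]
    exact ⟨eAdd H g, rfl⟩
  · -- injective
    rw [injective_iff_map_eq_zero]
    intro x hx
    obtain ⟨f, rfl⟩ := Submodule.Quotient.mk_surjective _ x
    have hz : QuotientAddGroup.mk' (del H).range (eAdd H f) = 0 := hx
    rw [QuotientAddGroup.mk'_apply, QuotientAddGroup.eq_zero_iff] at hz
    obtain ⟨a, ha⟩ := hz
    rw [Submodule.Quotient.mk_eq_zero]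
    refine ⟨(eAdd H).symm a, (eAdd H).injective ?_⟩
    rw [eAdd_d, (eAdd H).apply_symm_apply]
    exact ha
  · intro q
    obtain ⟨a, rfl⟩ := QuotientAddGroup.mk'_surjective (del H).range q
    exact ⟨Submodule.Quotient.mk ((eAdd H).symm a), by
      show QuotientAddGroup.mk' _ (eAdd H ((eAdd H).symm a)) = _
      rw [(eAdd H).apply_symm_apply]⟩

instance : Subsingleton (Pc ⟶ ModuleCat.of ℤ H) :=
  ⟨fun f g => ModuleCat.hom_ext (LinearMap.ext fun x => by
    rw [Subsingleton.elim x (0 : Pc), map_zero, map_zero])⟩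

lemma kd12 : (KK H).d 1 2 = 0 := by
  haveI : Subsingleton ((KK H).X 2) :=
    (inferInstance : Subsingleton (Pc ⟶ ModuleCat.of ℤ H))
  exact (ModuleCat.isZero_of_subsingleton ((KK H).X 2)).eq_of_tgt _ _

def bigIso :
    (((Ext ℤ (ModuleCat ℤ) 1).obj (Opposite.op (ModuleCat.of ℤ ℚ))).obj (ModuleCat.of ℤ H)) ≅
      ModuleCat.of ℤ (((KK H).X 1) ⧸ LinearMap.range ((KK H).d 0 1).hom) :=
  theRes.isoExt 1 (ModuleCat.of ℤ H) ≪≫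
    (KK H).isoHomologyι 1 2 (by simp) (kd12 H) ≪≫
    IsColimit.coconePointUniqueUpToIso ((KK H).opcyclesIsCokernel 0 1 (by simp))
      (cokernelIsCokernel _) ≪≫
    ModuleCat.cokernelIsoRangeQuotient _

def isoAddEquiv {A B : ModuleCat ℤ} (i : A ≅ B) : A ≃+ B where
  toFun := i.hom
  invFun := i.inv
  left_inv x := by
    change (i.hom ≫ i.inv) x = x
    rw [i.hom_inv_id]
    rfl
  right_inv x := by
    change (i.inv ≫ i.hom) x = x
    rw [i.inv_hom_id]
    rfl
  map_add' x y := map_add i.hom.hom x y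


/-- `Ext¹_ℤ(ℚ, H)` is isomorphic to `lim¹` of the tower with maps multiplication by `n+1`. -/
theorem stmt_3 (H : Type) [AddCommGroup H] :
    Nonempty
      ((((Ext ℤ (ModuleCat ℤ) 1).obj (Opposite.op (ModuleCat.of ℤ ℚ))).obj
          (ModuleCat.of ℤ H)) ≃+ ((ℕ → H) ⧸ (del H).range)) := by
  exact ⟨(isoAddEquiv (bigIso H)).trans (theQuotEquiv H)⟩
end
end

section
/- Let H: ℕ → Grp be a tower of groups with limit H_ω and projections φ_n: H_ω → H_n. Suppose F is a normal subgroup of H_ω such that the quotient T = H_ω/F is abelian and φ_n(F) = φ_n(H_ω) for every n ∈ ℕ. Then T is a cotorsion abelian group. -/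
open CategoryTheory

/-- The limit of a tower of groups, as a subgroup of the product. -/
def towerLimit (G : ℕ → Type) [∀ n, Group (G n)] (g : ∀ n, G (n + 1) →* G n) :
    Subgroup (∀ n, G n) where
  carrier := {x | ∀ n, g n (x (n + 1)) = x n}
  one_mem' := by intro n; simp
  mul_mem' := by intro a b ha hb n; simp [ha n, hb n]
  inv_mem' := by intro a ha n; simp [ha n]

/-- The projection `φ_n` from the limit of the tower to `G n`. -/
def towerProj (G : ℕ → Type) [∀ n, Group (G n)] (g : ∀ n, G (n + 1) →* G n) (n : ℕ) :
    towerLimit G g →* G n :=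
  (Pi.evalMonoidHom G n).comp (towerLimit G g).subtype

/- ===== Auxiliary material for the proof ===== -/

open Finsupp CategoryTheory.Limits Opposite

noncomputable section AuxResolution

def resV (n : ℕ) : ℕ →₀ ℤ := single n 1 - ((n : ℤ) + 1) • single (n + 1) 1
def resD : (ℕ →₀ ℤ) →ₗ[ℤ] (ℕ →₀ ℤ) := linearCombination ℤ resV
def resE : (ℕ →₀ ℤ) →ₗ[ℤ] ℚ := linearCombination ℤ (fun n => ((n.factorial : ℚ))⁻¹)

lemma fact_div_succ {n m : ℕ} (h : n < m) :
    (m.factorial / n.factorial : ℕ) = (n + 1) * (m.factorial / (n+1).factorial) := by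
  obtain ⟨k, hk⟩ := Nat.factorial_dvd_factorial (show n + 1 ≤ m from h)
  have h1 : m.factorial / (n+1).factorial = k := by
    rw [hk]; exact Nat.mul_div_cancel_left _ (Nat.factorial_pos _)
  have h2 : m.factorial / n.factorial = (n+1) * k := by
    rw [hk, Nat.factorial_succ, mul_assoc, mul_comm (n.factorial) k, ← mul_assoc,
      Nat.mul_div_cancel _ (Nat.factorial_pos _)]
  rw [h1, h2]

def resW (m : ℕ) : (ℕ →₀ ℤ) →ₗ[ℤ] ℤ :=
  linearCombination ℤ (fun n => if n ≤ m then ((m.factorial / n.factorial : ℕ) : ℤ) else 0)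

lemma resW_resV (m n : ℕ) : resW m (resV n) = if n = m then 1 else 0 := by
  simp only [resV, map_sub, map_zsmul, resW, linearCombination_single, smul_eq_mul, one_smul,
    one_mul]
  rcases lt_trichotomy n m with h | h | h
  · rw [if_neg h.ne, if_pos h.le, if_pos (by omega : n + 1 ≤ m)]
    rw [fact_div_succ h]; push_cast; ring
  · subst h
    rw [if_neg (by omega : ¬ n + 1 ≤ n), if_pos rfl, Nat.div_self (Nat.factorial_pos n)]
    push_cast
    ring_nf
    simp
  · rw [if_neg (by omega : ¬ n ≤ m), if_neg (by omega : ¬ n + 1 ≤ m), if_neg (by omega : ¬ n = m)]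
    ring

lemma resW_resD (m : ℕ) (x : ℕ →₀ ℤ) : resW m (resD x) = x m := by
  have : (resW m).comp resD = Finsupp.lapply m := by
    apply Finsupp.lhom_ext
    intro n a
    simp only [LinearMap.comp_apply, resD, linearCombination_single, map_smul,
      resW_resV, lapply_apply, smul_eq_mul, Finsupp.single_apply]
    rcases eq_or_ne n m with h|h
    · simp [h]
    · simp [h]
  exact DFunLike.congr_fun this x

lemma resD_injective : Function.Injective resD := by
  intro x y h
  ext m
  have := resW_resD m x
  rw [h, resW_resD] at this
  exact this.symm

lemma fact_div_succ' {n m : ℕ} (h : n ≤ m) :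
    ((m+1).factorial / n.factorial : ℕ) = (m + 1) * (m.factorial / n.factorial) := by
  obtain ⟨k, hk⟩ := Nat.factorial_dvd_factorial h
  rw [hk, Nat.mul_div_cancel_left _ (Nat.factorial_pos _), Nat.factorial_succ, hk,
    mul_left_comm, Nat.mul_div_cancel_left _ (Nat.factorial_pos _)]

lemma single_norm (n : ℕ) (a : ℤ) :
    ∀ m, n ≤ m → ∃ y : ℕ →₀ ℤ,
      single n a = resD y + (a * ((m.factorial / n.factorial : ℕ) : ℤ)) • single m 1 := by
  intro m hm
  induction m, hm using Nat.le_induction with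
  | base =>
    exact ⟨0, by simp [Nat.div_self (Nat.factorial_pos n), smul_single]⟩
  | succ m hm ih =>
    obtain ⟨y, hy⟩ := ih
    set c : ℤ := ((m.factorial / n.factorial : ℕ) : ℤ) with hc
    have hfact : (((m+1).factorial / n.factorial : ℕ) : ℤ) = ((m : ℤ) + 1) * c := by
      rw [fact_div_succ' hm, Nat.cast_mul, Nat.cast_add_one]
    refine ⟨y + (a * c) • single m 1, ?_⟩
    have hsm : (single m 1 : ℕ →₀ ℤ) = resV m + ((m : ℤ) + 1) • single (m+1) 1 := by
      simp [resV]
    have hD : resD ((a * c) • single m 1) = (a * c) • resV m := by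
      rw [map_smul, show resD (single m 1) = resV m from by simp [resD]]
    rw [map_add, hD, hfact, hy, hsm]
    module

lemma to_normal (x : ℕ →₀ ℤ) : ∃ (y : ℕ →₀ ℤ) (a : ℤ) (m : ℕ),
    x = resD y + a • single m 1 := by
  induction x using Finsupp.induction_linear with
  | zero => exact ⟨0, 0, 0, by simp⟩
  | add u v hu hv =>
    obtain ⟨y, a, m, hy⟩ := hu
    obtain ⟨y', a', m', hy'⟩ := hv
    have h1 : single m a = (a • single m 1 : ℕ →₀ ℤ) := by simp [smul_single]
    have h2 : single m' a' = (a' • single m' 1 : ℕ →₀ ℤ) := by simp [smul_single]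
    obtain ⟨z, hz⟩ := single_norm m a (max m m') (le_max_left _ _)
    obtain ⟨z', hz'⟩ := single_norm m' a' (max m m') (le_max_right _ _)
    rw [h1] at hz; rw [h2] at hz'
    refine ⟨y + y' + z + z',
      a * (((max m m').factorial / m.factorial : ℕ) : ℤ) +
        a' * (((max m m').factorial / m'.factorial : ℕ) : ℤ), max m m', ?_⟩
    rw [hy, hy', hz, hz']
    simp only [map_add]
    module
  | single n b =>
    exact ⟨0, b, n, by simp [smul_single]⟩

lemma resE_single' (n : ℕ) (a : ℤ) : resE (single n a) = a * ((n.factorial : ℚ))⁻¹ := by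
  have : (single n a : ℕ →₀ ℤ) = a • single n 1 := by simp [smul_single]
  rw [this, map_smul, resE]
  simp [linearCombination_single, zsmul_eq_mul]

lemma resE_resV (n : ℕ) : resE (resV n) = 0 := by
  have h : ((n + 1).factorial : ℚ) = (n + 1) * n.factorial := by
    rw [Nat.factorial_succ]; push_cast; ring
  have h2 : (n.factorial : ℚ) ≠ 0 := Nat.cast_ne_zero.2 (Nat.factorial_ne_zero n)
  simp only [resV, map_sub, map_zsmul, resE_single', Int.cast_one, one_mul, zsmul_eq_mul]
  rw [h, mul_inv]
  field_simp
  push_cast; ring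

lemma resE_resD (x : ℕ →₀ ℤ) : resE (resD x) = 0 := by
  induction x using Finsupp.induction_linear with
  | zero => simp
  | add u v hu hv => rw [map_add, map_add, hu, hv, add_zero]
  | single n b =>
    have : resD (single n b) = b • resV n := by
      have : (single n b : ℕ →₀ ℤ) = b • single n 1 := by simp [smul_single]
      rw [this, map_smul]; simp [resD, linearCombination_single]
    rw [this, map_smul, resE_resV, smul_zero]

lemma ker_resE_sub_range (x : ℕ →₀ ℤ) (hx : resE x = 0) : ∃ y, resD y = x := by
  obtain ⟨y, a, m, hy⟩ := to_normal x
  have : resE x = a * ((m.factorial : ℚ))⁻¹ := by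
    rw [hy, map_add, resE_resD, zero_add]
    have : (a • single m 1 : ℕ →₀ ℤ) = single m a := by simp [smul_single]
    rw [this, resE_single']
  rw [hx] at this
  have hm : ((m.factorial : ℚ))⁻¹ ≠ 0 :=
    inv_ne_zero (Nat.cast_ne_zero.2 (Nat.factorial_ne_zero m))
  have ha : (a : ℚ) = 0 := by
    rcases mul_eq_zero.1 this.symm with h | h
    · exact h
    · exact absurd h hm
  have ha' : a = 0 := by exact_mod_cast ha
  exact ⟨y, by rw [hy, ha', zero_smul, add_zero]⟩

lemma resE_surjective : Function.Surjective resE := by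
  intro q
  set m := q.den with hm
  have hdvd : q.den ∣ m.factorial := Nat.dvd_factorial q.pos le_rfl
  refine ⟨single m (q.num * ((m.factorial / q.den : ℕ) : ℤ)), ?_⟩
  rw [resE_single']
  have h1 : ((m.factorial / q.den : ℕ) : ℚ) * q.den = m.factorial := by
    exact_mod_cast Nat.div_mul_cancel hdvd
  have h2 : (m.factorial : ℚ) ≠ 0 := Nat.cast_ne_zero.2 (Nat.factorial_ne_zero m)
  have hden : (q.den : ℚ) ≠ 0 := Nat.cast_ne_zero.2 q.den_nz
  have key : ((m.factorial / q.den : ℕ) : ℚ) = (m.factorial : ℚ) / q.den := by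
    rw [eq_div_iff hden]; exact h1
  have hnum : (q.num : ℚ) = q * q.den := by
    have := Rat.num_div_den q
    rw [div_eq_iff hden] at this
    exact this
  rw [Int.cast_mul, Int.cast_natCast, key, hnum]
  field_simp

/-- the objects of the resolution -/
def resX : ℕ → ModuleCat ℤ
  | 0 => ModuleCat.of ℤ (ℕ →₀ ℤ)
  | 1 => ModuleCat.of ℤ (ℕ →₀ ℤ)
  | _ => ModuleCat.of ℤ PUnit

def resd : ∀ n : ℕ, resX (n + 1) ⟶ resX n
  | 0 => ModuleCat.ofHom resD
  | (_+1) => 0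

/-- The free resolution of ℚ as a complex. -/
def resC : ChainComplex (ModuleCat ℤ) ℕ :=
  ChainComplex.of resX resd (by rintro (_|n) <;> exact zero_comp)

lemma resC_d_1_0 : resC.d 1 0 = ModuleCat.ofHom resD := by exact ChainComplex.of_d resX resd 0

instance resC_projective (n : ℕ) : CategoryTheory.Projective (resC.X n) := by
  have h0 : CategoryTheory.Projective (ModuleCat.of ℤ (ℕ →₀ ℤ)) :=
    ModuleCat.projective_of_free (Finsupp.basisSingleOne (R := ℤ) (ι := ℕ))
  have h1 : CategoryTheory.Projective (ModuleCat.of ℤ PUnit) :=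
    ModuleCat.projective_of_free (Module.Basis.empty (ι := Fin 0) (M := PUnit) (R := ℤ))
  obtain (_|_|n) := n <;> assumption

def resS : CategoryTheory.ShortComplex (ModuleCat ℤ) :=
  CategoryTheory.ShortComplex.mk (ModuleCat.ofHom resD) (ModuleCat.ofHom resE)
    (by apply ModuleCat.hom_ext; apply LinearMap.ext; intro x; exact resE_resD x)

lemma resE_comp : resC.d 1 0 ≫ (ModuleCat.ofHom resE : resC.X 0 ⟶ ModuleCat.of ℤ ℚ) = 0 := by
  rw [resC_d_1_0]
  ext x
  exact resE_resD x

open CategoryTheory in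
/-- A projective resolution of ℚ over ℤ. -/
def rationalsResolution : ProjectiveResolution (ModuleCat.of ℤ ℚ) where
  complex := resC
  π := (ChainComplex.toSingle₀Equiv _ _).symm ⟨ModuleCat.ofHom resE, resE_comp⟩
  quasiIso := ⟨fun n => by
    cases n with
    | zero =>
      rw [ChainComplex.quasiIsoAt₀_iff, ShortComplex.quasiIso_iff_of_zeros' _ rfl rfl rfl]
      refine (ShortComplex.exact_and_epi_g_iff_of_iso (S₂ := resS) ?_).2 ⟨?_, ?_⟩
      · exact ShortComplex.isoMk (Iso.refl _) (Iso.refl _) (Iso.refl _)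
          (by simp [resC_d_1_0]; rfl) (by simp [ChainComplex.toSingle₀Equiv]; rfl)
      · rw [ShortComplex.moduleCat_exact_iff]
        intro x hx
        exact ker_resE_sub_range x hx
      · rw [ModuleCat.epi_iff_surjective]
        exact resE_surjective
    | succ n =>
      rw [quasiIsoAt_iff_exactAt' _ _ (ChainComplex.exactAt_succ_single_obj _ _)]
      cases n with
      | zero =>
        rw [HomologicalComplex.exactAt_iff' _ 2 1 0 (by simp) (by simp)]
        rw [ShortComplex.moduleCat_exact_iff]
        intro x hx
        refine ⟨0, ?_⟩
        dsimp [HomologicalComplex.sc', HomologicalComplex.shortComplexFunctor'] at hx ⊢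
        rw [resC_d_1_0] at hx
        have h0 : x = 0 := resD_injective (by exact hx.trans (map_zero resD).symm)
        rw [h0]
        exact map_zero _
      | succ n =>
        rw [HomologicalComplex.exactAt_iff' _ (n + 3) (n + 2) (n + 1) (by simp) (by simp)]
        apply ShortComplex.exact_of_isZero_X₂
        exact ModuleCat.isZero_of_subsingleton (ModuleCat.of ℤ PUnit)⟩

open CategoryTheory in
lemma isCotorsion_of_sol (T : Type) [AddCommGroup T]
    (h : ∀ t : ℕ → T, ∃ s : ℕ → T, ∀ n, s n - ((n : ℤ) + 1) • s (n + 1) = t n) :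
    IsCotorsion T := by
  rw [IsCotorsion]
  set Y : ModuleCat ℤ := ModuleCat.of ℤ T with hY
  have hz : Limits.IsZero ((resC.linearYonedaObj ℤ Y).homology 1) := by
    rw [← HomologicalComplex.exactAt_iff_isZero_homology]
    rw [HomologicalComplex.exactAt_iff' _ 0 1 2 (by simp) (by simp)]
    rw [ShortComplex.moduleCat_exact_iff]
    intro φ hφ
    clear hφ
    let φ' : resC.X 1 ⟶ Y := φ
    obtain ⟨s, hs⟩ := h (fun n => φ' (single n 1))
    refine ⟨ModuleCat.ofHom (linearCombination ℤ s), ?_⟩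
    show resC.d 1 0 ≫ ModuleCat.ofHom (linearCombination ℤ s) = φ'
    rw [resC_d_1_0]
    apply ModuleCat.hom_ext
    apply Finsupp.lhom_ext
    intro n b
    show (linearCombination ℤ s) (resD (single n b)) = φ' (single n b)
    have hb : (single n b : ℕ →₀ ℤ) = b • single n 1 := by simp [smul_single]
    rw [hb, map_smul, map_smul]
    erw [map_smul]
    congr 1
    have : resD (single n 1) = resV n := by simp [resD]
    rw [this]
    have : (linearCombination ℤ s) (resV n) = s n - ((n : ℤ) + 1) • s (n + 1) := by
      simp only [resV, map_sub, map_zsmul, linearCombination_single, one_smul]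
    rw [this, hs n]
  have hz2 : Limits.IsZero (((Ext ℤ (ModuleCat ℤ) 1).obj (op (ModuleCat.of ℤ ℚ))).obj Y) :=
    hz.of_iso (rationalsResolution.isoExt 1 Y)
  constructor
  intro a b
  have h1 : (𝟙 (((Ext ℤ (ModuleCat ℤ) 1).obj (op (ModuleCat.of ℤ ℚ))).obj Y) :
      _ ⟶ _) = 0 := hz2.eq_of_src _ _
  calc a = 𝟙 (((Ext ℤ (ModuleCat ℤ) 1).obj (op (ModuleCat.of ℤ ℚ))).obj Y) a := rfl
    _ = (0 : _ →ₗ[ℤ] _) a := by rw [h1]; rfl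
    _ = 0 := rfl
    _ = (0 : _ →ₗ[ℤ] _) b := rfl
    _ = 𝟙 (((Ext ℤ (ModuleCat ℤ) 1).obj (op (ModuleCat.of ℤ ℚ))).obj Y) b := by rw [h1]; rfl
    _ = b := rfl

end AuxResolution

section AuxTower

variable {G : ℕ → Type} [∀ n, Group (G n)] {g : ∀ n, G (n + 1) →* G n}

lemma tower_lev (x : towerLimit G g) {k n : ℕ} (hk : k ≤ n)
    (hx : (x : ∀ m, G m) n = 1) : (x : ∀ m, G m) k = 1 := by
  induction n with
  | zero => obtain rfl : k = 0 := Nat.le_zero.mp hk; exact hx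
  | succ n ih =>
    rcases Nat.lt_succ_iff_lt_or_eq.mp (Nat.lt_succ_of_le hk) with h | h
    · have h1 : (x : ∀ m, G m) n = 1 := by
        rw [← x.2 n, hx, map_one]
      exact ih (Nat.lt_succ_iff.mp h) h1
    · subst h; exact hx

variable (g) in
/-- Component at level `k` of the infinite product `x'_n · x'_{n+1}^{n+1} · ...`. -/
def Ycomp (x' : ℕ → towerLimit G g) (k n : ℕ) : G k :=
  if h : k ≤ n then 1
  else ((x' n : ∀ m, G m) k) * (Ycomp x' k (n + 1)) ^ (n + 1)
termination_by k - n
decreasing_by omega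

lemma Ycomp_of_le (x' : ℕ → towerLimit G g) {k n : ℕ} (h : k ≤ n) :
    Ycomp g x' k n = 1 := by
  rw [Ycomp, dif_pos h]

lemma Ycomp_of_gt (x' : ℕ → towerLimit G g) {k n : ℕ} (h : n < k) :
    Ycomp g x' k n = ((x' n : ∀ m, G m) k) * (Ycomp g x' k (n + 1)) ^ (n + 1) := by
  rw [Ycomp, dif_neg (by omega)]

lemma Ycomp_compat (x' : ℕ → towerLimit G g) (hx' : ∀ m, (x' m : ∀ i, G i) m = 1)
    (k n : ℕ) : g k (Ycomp g x' (k + 1) n) = Ycomp g x' k n := by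
  rcases lt_trichotomy n k with h | h | h
  · rw [Ycomp_of_gt x' (by omega : n < k + 1), Ycomp_of_gt x' h, map_mul, map_pow,
      Ycomp_compat x' hx' k (n + 1), (x' n).2 k]
  · subst h
    rw [Ycomp_of_gt x' (by omega : n < n + 1), Ycomp_of_le x' (le_refl (n + 1)),
      Ycomp_of_le x' (le_refl n), one_pow, mul_one, (x' n).2 n, hx' n]
  · rw [Ycomp_of_le x' (by omega : k + 1 ≤ n), Ycomp_of_le x' (by omega : k ≤ n), map_one]
termination_by (k + 1) - n
decreasing_by omega

variable (g) in
def Yel (x' : ℕ → towerLimit G g) (hx' : ∀ m, (x' m : ∀ i, G i) m = 1) (n : ℕ) :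
    towerLimit G g :=
  ⟨fun k => Ycomp g x' k n, fun k => Ycomp_compat x' hx' k n⟩

lemma Yel_rec (x' : ℕ → towerLimit G g) (hx' : ∀ m, (x' m : ∀ i, G i) m = 1) (n : ℕ) :
    Yel g x' hx' n = x' n * (Yel g x' hx' (n + 1)) ^ (n + 1) := by
  apply Subtype.ext
  funext k
  have hco : ((x' n * (Yel g x' hx' (n + 1)) ^ (n + 1) : towerLimit G g) : ∀ m, G m) k =
      ((x' n : ∀ m, G m) k) * ((Yel g x' hx' (n + 1) : ∀ m, G m) k) ^ (n + 1) := by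
    simp
  rw [hco]
  show Ycomp g x' k n = _
  rcases lt_or_ge n k with h | h
  · rw [Ycomp_of_gt x' h]; rfl
  · rw [Ycomp_of_le x' h]
    have h1 : (x' n : ∀ m, G m) k = 1 := tower_lev (x' n) h (hx' n)
    have h2 : ((Yel g x' hx' (n + 1) : ∀ m, G m) k) = 1 :=
      Ycomp_of_le x' (by omega : k ≤ n + 1)
    rw [h1, h2, one_pow, mul_one]

theorem tower_sol (F : Subgroup (towerLimit G g)) [F.Normal]
    (hF : ∀ n : ℕ, F.map (towerProj G g n) = (⊤ : Subgroup (towerLimit G g)).map (towerProj G g n))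
    (t : ℕ → towerLimit G g ⧸ F) :
    ∃ s : ℕ → towerLimit G g ⧸ F, ∀ n, s n = t n * s (n + 1) ^ (n + 1) := by
  have hx : ∀ n, ∃ x' : towerLimit G g, (x' : ∀ m, G m) n = 1 ∧
      QuotientGroup.mk x' = t n := by
    intro n
    obtain ⟨x, hxt⟩ := QuotientGroup.mk_surjective (t n)
    have hmem : towerProj G g n x ∈ (⊤ : Subgroup (towerLimit G g)).map (towerProj G g n) :=
      ⟨x, trivial, rfl⟩
    rw [← hF n] at hmem
    obtain ⟨f, hfF, hf⟩ := hmem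
    refine ⟨x * f⁻¹, ?_, ?_⟩
    · show towerProj G g n (x * f⁻¹) = 1
      rw [map_mul, map_inv, hf, mul_inv_cancel]
    · rw [← hxt]
      apply (QuotientGroup.eq (s := F)).mpr
      simpa using F.inv_mem hfF
  choose x' hx'1 hx'2 using hx
  refine ⟨fun n => QuotientGroup.mk (Yel g x' hx'1 n), ?_⟩
  intro n
  show (QuotientGroup.mk (Yel g x' hx'1 n) : towerLimit G g ⧸ F) =
      t n * (QuotientGroup.mk (Yel g x' hx'1 (n + 1)) : towerLimit G g ⧸ F) ^ (n + 1)
  rw [Yel_rec x' hx'1 n, QuotientGroup.mk_mul, QuotientGroup.mk_pow, hx'2 n]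

end AuxTower

/-- If `F ⊴ H_ω` has abelian quotient `T = H_ω/F` and `φ_n(F) = φ_n(H_ω)` for all `n`,
then `T` is cotorsion. -/
theorem stmt_5 (G : ℕ → Type) [∀ n, Group (G n)] (g : ∀ n, G (n + 1) →* G n)
    (F : Subgroup (towerLimit G g)) [F.Normal]
    (hab : ∀ x y : towerLimit G g ⧸ F, x * y = y * x)
    (hF : ∀ n : ℕ, F.map (towerProj G g n) = (⊤ : Subgroup (towerLimit G g)).map (towerProj G g n)) :
    letI : CommGroup (towerLimit G g ⧸ F) :=
      { (inferInstance : Group (towerLimit G g ⧸ F)) with mul_comm := hab }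
    IsCotorsion (Additive (towerLimit G g ⧸ F)) := by
  letI : CommGroup (towerLimit G g ⧸ F) :=
    { (inferInstance : Group (towerLimit G g ⧸ F)) with mul_comm := hab }
  show IsCotorsion (Additive (towerLimit G g ⧸ F))
  apply isCotorsion_of_sol
  intro t
  obtain ⟨sm, hsm⟩ := tower_sol F hF (fun n => Additive.toMul (t n))
  refine ⟨fun n => Additive.ofMul (sm n), ?_⟩
  intro n
  show Additive.ofMul (sm n) - ((n : ℤ) + 1) • Additive.ofMul (sm (n + 1)) = t n
  have h1 := hsm n
  rw [h1]
  have h2 : Additive.ofMul (Additive.toMul (t n) * sm (n + 1) ^ (n + 1)) =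
      t n + (n + 1) • Additive.ofMul (sm (n + 1)) := by
    rw [ofMul_mul, ofMul_pow, ofMul_toMul]
  rw [h2, show ((n : ℤ) + 1) = ((n + 1 : ℕ) : ℤ) from by push_cast; ring, natCast_zsmul,
    add_sub_cancel_right]
end

section
/- Let G: ℕ → Grp be a tower of groups satisfying the Mittag-Leffler condition. Then the natural map Ab(lim_n G_n) → lim_n Ab(G_n) is surjective and its kernel is a cotorsion abelian group. -/
open CategoryTheory

/-- The composite structure map `G (n+k) →* G n` of a tower. -/
def chain (G : ℕ → Type) [∀ n, Group (G n)] (g : ∀ n, G (n + 1) →* G n) :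
    ∀ n k : ℕ, G (n + k) →* G n
  | n, 0 => MonoidHom.id (G n)
  | n, (k + 1) => (chain G g n k).comp (g (n + k))

/-- The Mittag-Leffler condition for a tower of groups: for each `n` the decreasing
images `im (G m → G n)` stabilize. -/
def MittagLeffler (G : ℕ → Type) [∀ n, Group (G n)] (g : ∀ n, G (n + 1) →* G n) : Prop :=
  ∀ n : ℕ, ∃ k : ℕ, ∀ k' : ℕ, k ≤ k' → (chain G g n k).range = (chain G g n k').range

/-- The natural map `lim G → lim Ab(G)` induced by the abelianization projections. -/
def towerToLimAb (G : ℕ → Type) [∀ n, Group (G n)] (g : ∀ n, G (n + 1) →* G n) :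
    towerLimit G g →*
      towerLimit (fun n => Abelianization (G n)) (fun n => Abelianization.map (g n)) :=
  MonoidHom.codRestrict
    (MonoidHom.mk' (fun x n => Abelianization.of (x.1 n))
      (by intro a b; funext n; simp)) _
    (by
      intro x n
      show Abelianization.map (g n) (Abelianization.of (x.1 (n + 1))) = Abelianization.of (x.1 n)
      rw [Abelianization.map_of, x.2 n])

/-- The natural map `Ab(lim G) → lim Ab(G)`. -/
def abLimToLimAb (G : ℕ → Type) [∀ n, Group (G n)] (g : ∀ n, G (n + 1) →* G n) :
    Abelianization (towerLimit G g) →*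
      towerLimit (fun n => Abelianization (G n)) (fun n => Abelianization.map (g n)) :=
  Abelianization.lift (towerToLimAb G g)

/-!
Under the Mittag-Leffler condition the images of `G (n + r) → G n` stabilize to subgroups
`H n` with `g n (H (n + 1)) = H n`; hence `lim G → H n` is onto, and so is
`[lim G, lim G] → [H n, H n]`.

Surjectivity: for a compatible family `a n ∈ Ab (G n)`, the images in `G n` of the lifts of
`a (n + r)`, `r` large, form one coset of `[H n, H n]`. The map `g n` carries the coset at level
`n + 1` into the one at level `n`, and since it maps `[H (n + 1), H (n + 1)]` onto `[H n, H n]`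
every point of a coset lifts to the next one; dependent choice gives a compatible family of
representatives.

Cotorsion: `ℚ` has the free resolution `0 → ⊕ ℤ → ⊕ ℤ → ℚ → 0` sending `e n` to `1 / (n + 1)!`,
with relations `e n = (n + 2) • e (n + 1)`. So `Ext¹(ℚ, A) = 0` once every system
`x n = c n + (n + 2) • x (n + 1)` is solvable in `A`. In the kernel it is: correcting by
`[lim G, lim G]`, each `c n` is represented by an element of `lim G` with components in the
commutator subgroups and trivial in the levels `≤ n`, so `x n = c n * (c (n + 1) * ⋯) ^ (n + 2)` converges levelwise.
-/

namespace Abelianization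

variable {H : Type} [Group H]

lemma of_surjective : Function.Surjective (of : H → Abelianization H) :=
  QuotientGroup.mk_surjective

lemma of_eq_one_iff {x : H} : of x = 1 ↔ x ∈ commutator H := by
  rw [← MonoidHom.mem_ker, ker_of]

end Abelianization

section Tower

variable {G : ℕ → Type} [∀ n, Group (G n)] (g : ∀ n, G (n + 1) →* G n)

lemma cast_comp_eq_comp_cast {a b : ℕ} (e : a = b) :
    (MulEquiv.cast (M := G) e).toMonoidHom.comp (g a) =
      (g b).comp (MulEquiv.cast (M := G) (congrArg (· + 1) e)).toMonoidHom := by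
  subst e; rfl

lemma cast_cast_apply {a b c : ℕ} (e : a = b) (e' : b = c) (x : G a) :
    MulEquiv.cast e' (MulEquiv.cast e x) = MulEquiv.cast (M := G) (e.trans e') x := by
  subst e e'; rfl

lemma chain_one (n : ℕ) : chain G g n 1 = g n := MonoidHom.id_comp _

lemma chain_add (n p q : ℕ) :
    chain G g n (p + q) =
      ((chain G g n p).comp (chain G g (n + p) q)).comp
        (MulEquiv.cast (M := G) (n.add_assoc p q).symm).toMonoidHom := by
  induction q with
  | zero => rfl
  | succ q ih =>
    change (chain G g n (p + q)).comp (g _) = _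
    rw [ih, MonoidHom.comp_assoc, cast_comp_eq_comp_cast]
    rfl

lemma range_chain_add (n p q : ℕ) :
    (chain G g n (p + q)).range = (chain G g (n + p) q).range.map (chain G g n p) := by
  rw [chain_add, MonoidHom.range_comp, MonoidHom.range_eq_top.mpr (MulEquiv.surjective _),
    ← MonoidHom.range_eq_map, MonoidHom.range_comp]

lemma chain_apply_of_mem_shift {n : ℕ} {u : ∀ m, G (n + m)}
    (hu : u ∈ towerLimit (fun m => G (n + m)) (fun m => g (n + m))) (r : ℕ) :
    chain G g n r (u r) = u 0 := by
  induction r with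
  | zero => rfl
  | succ r ih => exact (congrArg (chain G g n r) (hu r)).trans ih

lemma chain_apply_of_mem {x : ∀ n, G n} (hx : x ∈ towerLimit G g) (n r : ℕ) :
    chain G g n r (x (n + r)) = x n :=
  chain_apply_of_mem_shift g (u := fun m => x (n + m)) (fun m => hx (n + m)) r

lemma g_comp_chain (j n : ℕ) :
    (g j).comp (chain G g (j + 1) n) =
      (chain G g j n).comp
        ((g (j + n)).comp (MulEquiv.cast (M := G) (j.succ_add n)).toMonoidHom) := by
  induction n with
  | zero => rfl
  | succ n ih =>
    change ((g j).comp (chain G g (j + 1) n)).comp (g _) = _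
    rw [ih, MonoidHom.comp_assoc, MonoidHom.comp_assoc, cast_comp_eq_comp_cast]
    rfl

lemma exists_mem_towerLimit_of_mem_shift {n : ℕ} {u : ∀ m, G (n + m)}
    (hu : u ∈ towerLimit (fun m => G (n + m)) (fun m => g (n + m))) :
    ∃ x ∈ towerLimit G g, x n = u 0 := by
  refine ⟨fun j => chain G g j n (MulEquiv.cast (n.add_comm j) (u j)), fun j => ?_, ?_⟩
  · have h := congrArg (· (MulEquiv.cast (n.add_comm (j + 1)) (u (j + 1)))) (g_comp_chain g j n)
    have h' := congrArg (· (u (j + 1))) (cast_comp_eq_comp_cast g (n.add_comm j))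
    simp only [MonoidHom.comp_apply, MulEquiv.coe_toMonoidHom, cast_cast_apply] at h h'
    change _ = chain G g j n (MulEquiv.cast _ (u j))
    rw [h, ← hu j, h']
  · exact chain_apply_of_mem_shift g hu n

lemma exists_mem_towerLimit_forall_mem (S : ∀ n, Set (G n)) (h0 : (S 0).Nonempty)
    (hS : ∀ n, ∀ x ∈ S n, ∃ y ∈ S (n + 1), g n y = x) :
    ∃ x ∈ towerLimit G g, ∀ n, x n ∈ S n := by
  choose f hfS hf using hS
  let u : ∀ n, S n := fun n =>
    Nat.rec ⟨h0.some, h0.some_mem⟩ (fun n x => ⟨f n x x.2, hfS n x x.2⟩) n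
  exact ⟨fun n => (u n).1, fun n => hf n (u n).1 (u n).2, fun n => (u n).2⟩

end Tower

namespace MittagLeffler

variable {G : ℕ → Type} [∀ n, Group (G n)] {g : ∀ n, G (n + 1) →* G n}
  (hML : MittagLeffler G g)

noncomputable def stableIndex (n : ℕ) : ℕ := (hML n).choose

noncomputable def stableImage (n : ℕ) : Subgroup (G n) :=
  (chain G g n (hML.stableIndex n)).range

lemma range_chain_of_le {n r : ℕ} (h : hML.stableIndex n ≤ r) :
    (chain G g n r).range = hML.stableImage n :=
  ((hML n).choose_spec r h).symm

lemma map_stableImage (n : ℕ) : (hML.stableImage (n + 1)).map (g n) = hML.stableImage n := by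
  set r := max (hML.stableIndex n) (hML.stableIndex (n + 1))
  rw [← hML.range_chain_of_le (le_max_right _ _ : _ ≤ r), ← chain_one g,
    ← range_chain_add, hML.range_chain_of_le (by omega)]

lemma map_commutator_chain {n r : ℕ} (h : hML.stableIndex n ≤ r) :
    (commutator (G (n + r))).map (chain G g n r) = ⁅hML.stableImage n, hML.stableImage n⁆ := by
  rw [commutator, Subgroup.map_commutator, ← MonoidHom.range_eq_map, hML.range_chain_of_le h]

lemma map_commutator_stableImage (n : ℕ) :
    ⁅hML.stableImage (n + 1), hML.stableImage (n + 1)⁆.map (g n) =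
      ⁅hML.stableImage n, hML.stableImage n⁆ := by
  rw [Subgroup.map_commutator, hML.map_stableImage]

lemma apply_mem_stableImage {x : ∀ n, G n} (hx : x ∈ towerLimit G g) (n : ℕ) :
    x n ∈ hML.stableImage n :=
  ⟨x (n + hML.stableIndex n), chain_apply_of_mem g hx n _⟩

lemma exists_mem_towerLimit_apply_eq {n : ℕ} {y : G n} (hy : y ∈ hML.stableImage n) :
    ∃ x ∈ towerLimit G g, x n = y := by
  obtain ⟨u, hu, huS⟩ := exists_mem_towerLimit_forall_mem (fun m => g (n + m))
    (fun m => {x | x ∈ hML.stableImage (n + m) ∧ chain G g n m x = y}) ⟨y, hy, rfl⟩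
    (fun m x ⟨hx, hxy⟩ => by
      rw [← hML.map_stableImage] at hx
      obtain ⟨x', hx', rfl⟩ := hx
      exact ⟨x', ⟨hx', hxy⟩, rfl⟩)
  obtain ⟨x, hx, hxn⟩ := exists_mem_towerLimit_of_mem_shift g hu
  exact ⟨x, hx, hxn.trans (huS 0).2⟩

lemma map_towerLimit (n : ℕ) :
    (towerLimit G g).map (Pi.evalMonoidHom G n) = hML.stableImage n := by
  ext y
  constructor
  · rintro ⟨x, hx, rfl⟩
    exact hML.apply_mem_stableImage hx n
  · intro hy
    obtain ⟨x, hx, rfl⟩ := hML.exists_mem_towerLimit_apply_eq hy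
    exact ⟨x, hx, rfl⟩

end MittagLeffler

section Abelianization

variable {G : ℕ → Type} [∀ n, Group (G n)] (g : ∀ n, G (n + 1) →* G n)

lemma of_chain (n r : ℕ) (z : G (n + r)) :
    Abelianization.of (chain G g n r z) =
      chain (fun n => Abelianization (G n)) (fun n => Abelianization.map (g n)) n r
        (Abelianization.of z) := by
  induction r with
  | zero => rfl
  | succ r ih => exact (ih _).trans (congrArg _ (Abelianization.map_of _ _).symm)

variable {a : ∀ n, Abelianization (G n)}

lemma of_chain_eq (ha : a ∈ towerLimit _ fun n => Abelianization.map (g n)) {n r : ℕ}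
    {z : G (n + r)} (hz : Abelianization.of z = a (n + r)) :
    Abelianization.of (chain G g n r z) = a n := by
  rw [of_chain, hz, chain_apply_of_mem _ ha]

lemma of_cast_eq {i j : ℕ} (e : i = j) {z : G i} (hz : Abelianization.of z = a i) :
    Abelianization.of (MulEquiv.cast e z) = a j := by
  subst e; exact hz

end Abelianization

namespace MittagLeffler

variable {G : ℕ → Type} [∀ n, Group (G n)] {g : ∀ n, G (n + 1) →* G n}
  (hML : MittagLeffler G g) (a : ∀ n, Abelianization (G n))

def stableLifts (n : ℕ) : Set (G n) :=
  {x | ∃ r, hML.stableIndex n ≤ r ∧ ∃ z : G (n + r),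
    Abelianization.of z = a (n + r) ∧ chain G g n r z = x}

lemma exists_chain_mem_stableLifts {n r : ℕ} (h : hML.stableIndex n ≤ r) :
    ∃ z : G (n + r), Abelianization.of z = a (n + r) ∧ chain G g n r z ∈ hML.stableLifts a n := by
  obtain ⟨z, hz⟩ := Abelianization.of_surjective (a (n + r))
  exact ⟨z, hz, r, h, z, hz, rfl⟩

variable {a}

lemma of_eq_of_mem_stableLifts (ha : a ∈ towerLimit _ fun n => Abelianization.map (g n))
    {n : ℕ} {x : G n} (hx : x ∈ hML.stableLifts a n) : Abelianization.of x = a n := by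
  obtain ⟨r, -, z, hz, rfl⟩ := hx
  exact of_chain_eq g ha hz

lemma mul_mem_stableLifts {n : ℕ} {x κ : G n} (hx : x ∈ hML.stableLifts a n)
    (hκ : κ ∈ ⁅hML.stableImage n, hML.stableImage n⁆) : x * κ ∈ hML.stableLifts a n := by
  obtain ⟨r, hr, z, hz, rfl⟩ := hx
  rw [← hML.map_commutator_chain hr] at hκ
  obtain ⟨κ', hκ', rfl⟩ := hκ
  refine ⟨r, hr, z * κ', ?_, map_mul _ _ _⟩
  rw [map_mul, hz, Abelianization.of_eq_one_iff.mpr hκ', mul_one]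

lemma inv_mul_chain_mem_commutator (ha : a ∈ towerLimit _ fun n => Abelianization.map (g n))
    {n r r' : ℕ} (hr : hML.stableIndex n ≤ r) (hrr' : r ≤ r') {z : G (n + r)} {z' : G (n + r')}
    (hz : Abelianization.of z = a (n + r)) (hz' : Abelianization.of z' = a (n + r')) :
    (chain G g n r z)⁻¹ * chain G g n r' z' ∈ ⁅hML.stableImage n, hML.stableImage n⁆ := by
  obtain ⟨q, rfl⟩ := Nat.exists_eq_add_of_le hrr'
  set w := chain G g (n + r) q (MulEquiv.cast (n.add_assoc r q).symm z')
  have hw : Abelianization.of w = a (n + r) := of_chain_eq g ha (of_cast_eq _ hz')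
  rw [← hML.map_commutator_chain hr, chain_add]
  refine ⟨z⁻¹ * w, Abelianization.of_eq_one_iff.mp ?_, by simp [w]⟩
  rw [map_mul, map_inv, hz, hw, inv_mul_cancel]

lemma inv_mul_mem_of_mem_stableLifts (ha : a ∈ towerLimit _ fun n => Abelianization.map (g n))
    {n : ℕ} {x x' : G n} (hx : x ∈ hML.stableLifts a n) (hx' : x' ∈ hML.stableLifts a n) :
    x⁻¹ * x' ∈ ⁅hML.stableImage n, hML.stableImage n⁆ := by
  obtain ⟨r, hr, z, hz, rfl⟩ := hx
  obtain ⟨r', hr', z', hz', rfl⟩ := hx'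
  rcases le_total r r' with h | h
  · exact hML.inv_mul_chain_mem_commutator ha hr h hz hz'
  · simpa using inv_mem (hML.inv_mul_chain_mem_commutator ha hr' h hz' hz)

lemma exists_mem_stableLifts_apply_eq (ha : a ∈ towerLimit _ fun n => Abelianization.map (g n))
    {n : ℕ} {x : G n} (hx : x ∈ hML.stableLifts a n) :
    ∃ y ∈ hML.stableLifts a (n + 1), g n y = x := by
  set r := max (hML.stableIndex n) (hML.stableIndex (n + 1))
  obtain ⟨z, hz, hzL⟩ := hML.exists_chain_mem_stableLifts a (le_max_right _ _ : _ ≤ r)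
  have hgz : g n (chain G g (n + 1) r z) ∈ hML.stableLifts a n := by
    refine ⟨1 + r, by omega, MulEquiv.cast (n.add_assoc 1 r) z, of_cast_eq _ hz, ?_⟩
    simp [chain_add, chain_one]
  obtain ⟨κ, hκ, hgκ⟩ : (g n (chain G g (n + 1) r z))⁻¹ * x ∈
      ⁅hML.stableImage (n + 1), hML.stableImage (n + 1)⁆.map (g n) := by
    rw [hML.map_commutator_stableImage]
    exact hML.inv_mul_mem_of_mem_stableLifts ha hgz hx
  exact ⟨_, hML.mul_mem_stableLifts hzL hκ, by rw [map_mul, hgκ, mul_inv_cancel_left]⟩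

end MittagLeffler

theorem MittagLeffler.surjective_abLimToLimAb {G : ℕ → Type} [∀ n, Group (G n)]
    {g : ∀ n, G (n + 1) →* G n} (hML : MittagLeffler G g) :
    Function.Surjective (abLimToLimAb G g) := by
  rintro ⟨a, ha⟩
  obtain ⟨_, _, h0⟩ := hML.exists_chain_mem_stableLifts a (n := 0) le_rfl
  obtain ⟨x, hx, hxL⟩ := exists_mem_towerLimit_forall_mem g (hML.stableLifts a) ⟨_, h0⟩
    (fun n _ hx => hML.exists_mem_stableLifts_apply_eq ha hx)
  exact ⟨Abelianization.of ⟨x, hx⟩,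
    Subtype.ext (funext fun n => hML.of_eq_of_mem_stableLifts ha (hxL n))⟩

section Kernel

variable {G : ℕ → Type} [∀ n, Group (G n)] {g : ∀ n, G (n + 1) →* G n}

lemma mem_ker_towerToLimAb_iff {X : towerLimit G g} :
    X ∈ (towerToLimAb G g).ker ↔ ∀ n, X.1 n ∈ commutator (G n) := by
  simp only [MonoidHom.mem_ker, Subtype.ext_iff, funext_iff, ← Abelianization.of_eq_one_iff]
  rfl

lemma ker_abLimToLimAb :
    (abLimToLimAb G g).ker = (towerToLimAb G g).ker.map Abelianization.of :=
  QuotientGroup.ker_lift _ _ (Abelianization.commutator_subset_ker _)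

lemma apply_eq_one_of_le {x : ∀ n, G n} (hx : x ∈ towerLimit G g) {m n : ℕ} (h : m ≤ n)
    (hn : x n = 1) : x m = 1 := by
  obtain ⟨r, rfl⟩ := Nat.exists_eq_add_of_le h
  rw [← chain_apply_of_mem g hx m r, hn, map_one]

lemma exists_eq_mul_pow (r : ℕ → towerLimit G g) (hr : ∀ n m, m ≤ n → (r n).1 m = 1)
    (e : ℕ → ℕ) : ∃ X : ℕ → towerLimit G g, ∀ n, X n = r n * X (n + 1) ^ e n ∧
      ∀ m, (X n).1 m ∈ Subgroup.closure (Set.range fun k => (r k).1 m) := by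
  -- `T R n` truncates `r n * (r (n + 1) * ⋯) ^ e n` at depth `R`; as `r k` vanishes in levels
  -- `≤ k`, its component in level `m` no longer changes once `m ≤ n + R`.
  let T : ℕ → ℕ → towerLimit G g := fun R =>
    Nat.rec (fun _ => 1) (fun _ T n => r n * T (n + 1) ^ e n) R
  have hT : ∀ R n m, m ≤ n + R → (T (R + 1) n).1 m = (T R n).1 m := by
    intro R
    induction R with
    | zero =>
      intro n m h
      simpa [T] using hr n m h
    | succ R ih =>
      intro n m h
      change (r n).1 m * ((T (R + 1) (n + 1)).1 m) ^ e n = (r n).1 m * ((T R (n + 1)).1 m) ^ e n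
      rw [ih (n + 1) m (by omega)]
  have hT_mem : ∀ R n m, (T R n).1 m ∈ Subgroup.closure (Set.range fun k => (r k).1 m) := by
    intro R
    induction R with
    | zero => exact fun _ _ => one_mem _
    | succ R ih =>
      exact fun n m => mul_mem (Subgroup.subset_closure ⟨n, rfl⟩) (pow_mem (ih (n + 1) m) _)
  refine ⟨fun n => ⟨fun m => (T m n).1 m, fun m => ?_⟩,
    fun n => ⟨Subtype.ext (funext fun m => ?_), fun m => hT_mem m n m⟩⟩
  · exact ((T (m + 1) n).2 m).trans (hT m n m (by omega))
  · exact (hT m n m (by omega)).symm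

lemma MittagLeffler.map_commutator_towerLimit (hML : MittagLeffler G g) (n : ℕ) :
    (commutator (towerLimit G g)).map ((Pi.evalMonoidHom G n).comp (towerLimit G g).subtype) =
      ⁅hML.stableImage n, hML.stableImage n⁆ := by
  rw [commutator, Subgroup.map_commutator, ← MonoidHom.range_eq_map, MonoidHom.range_comp,
    Subgroup.range_subtype, hML.map_towerLimit]

lemma MittagLeffler.exists_mem_ker_apply_eq_one (hML : MittagLeffler G g) {X : towerLimit G g}
    (hX : X ∈ (towerToLimAb G g).ker) (n : ℕ) : ∃ Y ∈ (towerToLimAb G g).ker, Y.1 n = 1 ∧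
      Abelianization.of Y = Abelianization.of X := by
  have hXn : X.1 n ∈ ⁅hML.stableImage n, hML.stableImage n⁆ := by
    rw [← hML.map_commutator_chain le_rfl, ← chain_apply_of_mem g X.2]
    exact ⟨_, mem_ker_towerToLimAb_iff.mp hX _, rfl⟩
  rw [← hML.map_commutator_towerLimit] at hXn
  obtain ⟨c, hc, hcX⟩ := hXn
  refine ⟨c⁻¹ * X, mul_mem (inv_mem (Abelianization.commutator_subset_ker _ hc)) hX, ?_, ?_⟩
  · exact (congrArg (· * X.1 n) (congrArg Inv.inv hcX)).trans (inv_mul_cancel _)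
  · rw [map_mul, map_inv, Abelianization.of_eq_one_iff.mpr hc, inv_one, one_mul]

theorem MittagLeffler.exists_eq_mul_pow_of_ker (hML : MittagLeffler G g)
    (c : ℕ → (abLimToLimAb G g).ker) :
    ∃ x : ℕ → (abLimToLimAb G g).ker, ∀ n, x n = c n * x (n + 1) ^ (n + 2) := by
  have hc : ∀ n, ∃ Y ∈ (towerToLimAb G g).ker, Y.1 n = 1 ∧ Abelianization.of Y = c n := by
    intro n
    obtain ⟨X, hX, hXc⟩ := ker_abLimToLimAb.le (c n).2
    obtain ⟨Y, hY, hYn, hYX⟩ := hML.exists_mem_ker_apply_eq_one hX n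
    exact ⟨Y, hY, hYn, hYX.trans hXc⟩
  choose Y hY hYn hYc using hc
  obtain ⟨X, hX⟩ := exists_eq_mul_pow Y
    (fun n m h => apply_eq_one_of_le (Y n).2 h (hYn n)) (· + 2)
  have hX_ker : ∀ n, Abelianization.of (X n) ∈ (abLimToLimAb G g).ker := fun n =>
    ker_abLimToLimAb.ge ⟨X n, mem_ker_towerToLimAb_iff.mpr fun m =>
      Subgroup.closure_le _ |>.mpr (Set.range_subset_iff.mpr fun k =>
        mem_ker_towerToLimAb_iff.mp (hY k) m) ((hX n).2 m), rfl⟩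
  refine ⟨fun n => ⟨_, hX_ker n⟩, fun n => Subtype.ext ?_⟩
  simp only [Subgroup.coe_mul, Subgroup.coe_pow, (hX n).1, map_mul, map_pow, hYc]

end Kernel

open CategoryTheory Limits ZeroObject

universe v u

namespace CategoryTheory

variable {C : Type u} [Category.{v} C] [Abelian C] {P₁ P₀ X : C} (d : P₁ ⟶ P₀)

noncomputable def twoTermComplex : ChainComplex C ℕ :=
  ChainComplex.of (fun | 0 => P₀ | 1 => P₁ | _ + 2 => 0) (fun | 0 => d | _ + 1 => 0)
    (fun _ => zero_comp)

lemma twoTermComplex_d_one_zero : (twoTermComplex d).d 1 0 = d := by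
  simp [twoTermComplex, ChainComplex.of.d]

lemma isZero_twoTermComplex_X (n : ℕ) : IsZero ((twoTermComplex d).X (n + 2)) := isZero_zero C

variable {d} {ε : P₀ ⟶ X}

noncomputable def ProjectiveResolution.ofShortExact [Projective P₁] [Projective P₀]
    (hdε : d ≫ ε = 0) [Mono d] [Epi ε] (hex : (ShortComplex.mk d ε hdε).Exact) :
    ProjectiveResolution X where
  complex := twoTermComplex d
  projective
    | 0 => ‹Projective P₀›
    | 1 => ‹Projective P₁›
    | n + 2 => (isZero_twoTermComplex_X d n).projective
  π := (ChainComplex.toSingle₀Equiv _ X).symm ⟨ε, by rw [twoTermComplex_d_one_zero]; exact hdε⟩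
  quasiIso := ⟨fun
    | 0 => by
      rw [ChainComplex.quasiIsoAt₀_iff, ShortComplex.quasiIso_iff_of_zeros' _ rfl rfl rfl]
      have hπ := ChainComplex.toSingle₀Equiv_symm_apply_f_zero (C := twoTermComplex d) ε
        (by rw [twoTermComplex_d_one_zero]; exact hdε)
      refine ⟨ShortComplex.exact_of_iso (S₁ := ShortComplex.mk d ε hdε)
        (ShortComplex.isoMk (Iso.refl _) (Iso.refl _) (Iso.refl _) ?_ ?_) hex, ?_⟩
      · exact (Category.id_comp _).trans
          ((twoTermComplex_d_one_zero d).trans (Category.comp_id d).symm)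
      · exact (Category.id_comp _).trans (hπ.trans (Category.comp_id ε).symm)
      · change Epi ((((twoTermComplex d).toSingle₀Equiv X).symm ⟨ε, _⟩).f 0)
        rwa [hπ]
    | 1 => by
      rw [quasiIsoAt_iff_exactAt' _ _ (ChainComplex.exactAt_succ_single_obj _ _),
        HomologicalComplex.exactAt_iff' _ 2 1 0 (by simp) (by simp),
        ShortComplex.exact_iff_mono _ ((isZero_twoTermComplex_X d 0).eq_of_src _ _)]
      change Mono ((twoTermComplex d).d 1 0)
      rwa [twoTermComplex_d_one_zero]
    | n + 2 => by
      rw [quasiIsoAt_iff_exactAt' _ _ (ChainComplex.exactAt_succ_single_obj _ _),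
        HomologicalComplex.exactAt_iff' _ (n + 3) (n + 2) (n + 1) (by simp) (by simp)]
      exact ShortComplex.exact_of_isZero_X₂ _ (isZero_twoTermComplex_X d n)⟩

lemma isZero_ext_one_of_forall_exists_comp_eq {R : Type*} [Ring R] [Linear R C]
    [EnoughProjectives C] [Projective P₁] [Projective P₀]
    (hdε : d ≫ ε = 0) [Mono d] [Epi ε] (hex : (ShortComplex.mk d ε hdε).Exact) (A : C)
    (hA : ∀ φ : P₁ ⟶ A, ∃ ψ : P₀ ⟶ A, d ≫ ψ = φ) :
    IsZero (((Ext R C 1).obj (Opposite.op X)).obj A) := by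
  refine IsZero.of_iso ?_ ((ProjectiveResolution.ofShortExact hdε hex).isoExt 1 A)
  rw [← HomologicalComplex.exactAt_iff_isZero_homology,
    HomologicalComplex.exactAt_iff' _ 0 1 2 (by simp) (by simp), ShortComplex.moduleCat_exact_iff]
  intro φ _
  obtain ⟨ψ, hψ⟩ := hA φ
  refine ⟨ψ, ?_⟩
  change (twoTermComplex d).d 1 0 ≫ ψ = φ
  rwa [twoTermComplex_d_one_zero]

end CategoryTheory

section RatResolution

open Finsupp

noncomputable def ratRel : (ℕ →₀ ℤ) →ₗ[ℤ] (ℕ →₀ ℤ) :=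
  linearCombination ℤ fun n => single n 1 - ((n : ℤ) + 2) • single (n + 1) 1

noncomputable def ratGen : (ℕ →₀ ℤ) →ₗ[ℤ] ℚ :=
  linearCombination ℤ fun n => ((n + 1).factorial : ℚ)⁻¹

lemma ratRel_apply_zero (y : ℕ →₀ ℤ) : ratRel y 0 = y 0 := by
  induction y using Finsupp.induction_linear with
  | zero => simp
  | add y y' hy hy' => simp [hy, hy']
  | single n c => simp [ratRel, single_apply]

lemma ratRel_apply_succ (y : ℕ →₀ ℤ) (m : ℕ) :
    ratRel y (m + 1) = y (m + 1) - (m + 2) * y m := by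
  induction y using Finsupp.induction_linear with
  | zero => simp
  | add y y' hy hy' => simp only [map_add, Finsupp.add_apply, hy, hy']; ring
  | single n c =>
    simp only [ratRel, linearCombination_single, smul_sub, Finsupp.sub_apply, smul_single,
      single_apply, add_left_inj, smul_eq_mul, mul_one]
    split_ifs <;> subst_vars <;> first | omega | ring

lemma ratRel_injective : Function.Injective ratRel := by
  rw [← LinearMap.ker_eq_bot, LinearMap.ker_eq_bot']
  intro y hy
  have h : ∀ m, y m = 0 := by
    intro m
    induction m with
    | zero => rw [← ratRel_apply_zero, hy, Finsupp.coe_zero, Pi.zero_apply]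
    | succ m ih => simpa [ih, hy] using (ratRel_apply_succ y m).symm
  exact Finsupp.ext h

lemma ratGen_comp_ratRel : ratGen ∘ₗ ratRel = 0 := by
  refine Finsupp.lhom_ext fun n c => ?_
  have h : ((n + 1).factorial : ℚ)⁻¹ - ((n : ℤ) + 2) • ((n + 1 + 1).factorial : ℚ)⁻¹ = 0 := by
    rw [Nat.factorial_succ (n + 1), zsmul_eq_mul]
    push_cast
    field_simp
    ring
  simp only [LinearMap.comp_apply, ratRel, ratGen, linearCombination_single, map_smul, map_sub,
    one_smul]
  rw [h, smul_zero, LinearMap.zero_apply]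

lemma ratGen_surjective : Function.Surjective ratGen := by
  intro q
  obtain ⟨m, hm⟩ := Nat.dvd_factorial q.den_pos le_rfl
  refine ⟨single (q.den - 1) (q.num * m), ?_⟩
  rw [ratGen, linearCombination_single, Nat.sub_add_cancel q.den_pos, hm, zsmul_eq_mul]
  have hm0 : (m : ℚ) ≠ 0 := by
    rintro h
    simp_all [Nat.factorial_ne_zero]
  push_cast
  field_simp
  exact (Rat.den_mul_eq_num q).symm

lemma exists_sub_smul_single_mem_range_ratRel (x : ℕ →₀ ℤ) :
    ∃ N₀, ∀ N ≥ N₀, ∃ k : ℤ, x - k • single N 1 ∈ LinearMap.range ratRel := by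
  induction x using Finsupp.induction_linear with
  | zero => exact ⟨0, fun N _ => ⟨0, by simp⟩⟩
  | add x y hx hy =>
    obtain ⟨N₁, hN₁⟩ := hx
    obtain ⟨N₂, hN₂⟩ := hy
    refine ⟨max N₁ N₂, fun N hN => ?_⟩
    obtain ⟨k₁, hk₁⟩ := hN₁ N (le_of_max_le_left hN)
    obtain ⟨k₂, hk₂⟩ := hN₂ N (le_of_max_le_right hN)
    exact ⟨k₁ + k₂, by simpa only [add_smul, add_sub_add_comm] using add_mem hk₁ hk₂⟩
  | single j c =>
    refine ⟨j, Nat.le_induction ⟨c, by simp⟩ fun N _ ⟨k, hk⟩ => ⟨k * (N + 2), ?_⟩⟩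
    have hN : single N 1 - ((N : ℤ) + 2) • single (N + 1) 1 ∈ LinearMap.range ratRel :=
      ⟨single N 1, by simp [ratRel]⟩
    convert add_mem hk (Submodule.smul_mem _ k hN) using 1
    rw [smul_sub, smul_smul]
    abel

lemma mem_range_ratRel_of_ratGen_eq_zero {x : ℕ →₀ ℤ} (hx : ratGen x = 0) :
    x ∈ LinearMap.range ratRel := by
  obtain ⟨N, hN⟩ := exists_sub_smul_single_mem_range_ratRel x
  obtain ⟨k, y, hy⟩ := hN N le_rfl
  have hk : k = 0 := by
    have h := congrArg ratGen hy
    rw [← LinearMap.comp_apply, ratGen_comp_ratRel, map_sub, hx, map_smul, ratGen,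
      linearCombination_single] at h
    simpa [Nat.factorial_ne_zero] using h
  rw [hk, zero_smul, sub_zero] at hy
  exact ⟨y, hy⟩

lemma exists_comp_ratRel_eq {A : Type*} [AddCommGroup A]
    (hA : ∀ c : ℕ → A, ∃ x : ℕ → A, ∀ n, x n = c n + (n + 2) • x (n + 1))
    (φ : (ℕ →₀ ℤ) →ₗ[ℤ] A) : ∃ ψ : (ℕ →₀ ℤ) →ₗ[ℤ] A, ψ ∘ₗ ratRel = φ := by
  obtain ⟨x, hx⟩ := hA fun n => φ (single n 1)
  refine ⟨linearCombination ℤ x, Finsupp.lhom_ext fun n c => ?_⟩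
  have h : x n - ((n : ℤ) + 2) • x (n + 1) = φ (single n 1) := by
    rw [sub_eq_iff_eq_add', hx n, add_comm]
    norm_cast
  rw [LinearMap.comp_apply, ratRel, linearCombination_single, map_smul, map_sub, map_smul,
    linearCombination_single, linearCombination_single, one_smul, one_smul, h, ← map_smul,
    smul_single, smul_eq_mul, mul_one]

end RatResolution

theorem isCotorsion_of_forall_exists_eq_add_smul (A : Type) [AddCommGroup A]
    (hA : ∀ c : ℕ → A, ∃ x : ℕ → A, ∀ n, x n = c n + (n + 2) • x (n + 1)) : IsCotorsion A := by
  have : Projective (ModuleCat.of ℤ (ℕ →₀ ℤ)) :=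
    ModuleCat.projective_of_free Finsupp.basisSingleOne
  have : Mono (ModuleCat.ofHom ratRel) := (ModuleCat.mono_iff_injective _).mpr ratRel_injective
  have : Epi (ModuleCat.ofHom ratGen) := (ModuleCat.epi_iff_surjective _).mpr ratGen_surjective
  have hdε : ModuleCat.ofHom ratRel ≫ ModuleCat.ofHom ratGen = 0 :=
    ModuleCat.hom_ext ratGen_comp_ratRel
  refine ModuleCat.subsingleton_of_isZero
    (isZero_ext_one_of_forall_exists_comp_eq hdε ?_ _ fun φ => ?_)
  · exact (ShortComplex.moduleCat_exact_iff _).mpr fun _ => mem_range_ratRel_of_ratGen_eq_zero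
  · obtain ⟨ψ, hψ⟩ := exists_comp_ratRel_eq hA φ.hom
    exact ⟨ModuleCat.ofHom ψ, ModuleCat.hom_ext hψ⟩

/-- For a tower of groups satisfying the Mittag-Leffler condition, the natural map
`Ab(lim G) → lim Ab(G)` is surjective with cotorsion kernel. -/
theorem stmt_6 (G : ℕ → Type) [∀ n, Group (G n)] (g : ∀ n, G (n + 1) →* G n)
    (hML : MittagLeffler G g) :
    Function.Surjective (abLimToLimAb G g) ∧
      IsCotorsion (Additive (abLimToLimAb G g).ker) := by
  refine ⟨hML.surjective_abLimToLimAb, isCotorsion_of_forall_exists_eq_add_smul _ fun c => ?_⟩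
  obtain ⟨x, hx⟩ := hML.exists_eq_mul_pow_of_ker fun n => (c n).toMul
  exact ⟨fun n => .ofMul (x n), fun n => congrArg Additive.ofMul (hx n)⟩
end

section
/- For any group G, the commutator subgroup of the countable power G^ℕ consists precisely of those sequences (h_n) ∈ ∏_n [G,G] for which the commutator lengths of the h_n are bounded. -/
/-!
A product of `k` commutators in `G^ℕ` is, coordinatewise, a product of `k` commutators in `G`,
which bounds the commutator lengths by `k`. Conversely, if every `h n` is a product of at most `B`
commutators, padding with trivial commutators makes it exactly `B`, and the coordinatewise
factorizations assemble into a product of `B` commutators in `G^ℕ`.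
-/

open scoped commutatorElement

/-- The commutator length of `x`: the least `k` such that `x` is a product of `k`
commutators (junk value via `sInf` if `x` is not in the commutator subgroup). -/
noncomputable def commLength {G : Type} [Group G] (x : G) : ℕ :=
  sInf {k : ℕ | ∃ a b : Fin k → G, x = (List.ofFn (fun i => ⁅a i, b i⁆)).prod}

def IsProdOfCommutators {G : Type*} [Group G] (k : ℕ) (x : G) : Prop :=
  ∃ a b : Fin k → G, x = (List.ofFn (fun i => ⁅a i, b i⁆)).prod

section Group

variable {G : Type*} [Group G]

theorem IsProdOfCommutators.mono {x : G} {k m : ℕ} (hkm : k ≤ m)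
    (hx : IsProdOfCommutators k x) : IsProdOfCommutators m x := by
  induction m, hkm using Nat.le_induction with
  | base => exact hx
  | succ m _ ih =>
    obtain ⟨a, b, rfl⟩ := ih
    refine ⟨Fin.snoc a 1, Fin.snoc b 1, ?_⟩
    rw [List.ofFn_succ']
    simp

theorem commutatorSet_inv : (commutatorSet G)⁻¹ = commutatorSet G := by
  ext g
  simp only [Set.mem_inv, mem_commutatorSet_iff]
  constructor
  · rintro ⟨a, b, hab⟩
    exact ⟨b, a, by rw [← commutatorElement_inv, hab, inv_inv]⟩
  · rintro ⟨a, b, rfl⟩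
    exact ⟨b, a, (commutatorElement_inv a b).symm⟩

theorem mem_commutator_iff_exists_isProdOfCommutators {x : G} :
    x ∈ commutator G ↔ ∃ k, IsProdOfCommutators k x := by
  constructor
  · intro hx
    have hx' : x ∈ Submonoid.closure (commutatorSet G) := by
      rwa [commutator_eq_closure, ← Subgroup.mem_toSubmonoid, Subgroup.closure_toSubmonoid,
        commutatorSet_inv, Set.union_self] at hx
    obtain ⟨l, hl, rfl⟩ := Submonoid.exists_list_of_mem_closure hx'
    choose a b hab using fun i : Fin l.length => mem_commutatorSet_iff.mp (hl _ (l.get_mem i))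
    refine ⟨l.length, a, b, ?_⟩
    conv_lhs => rw [← List.ofFn_get l]
    simp only [hab]
  · rintro ⟨k, a, b, rfl⟩
    refine list_prod_mem fun g hg => ?_
    obtain ⟨i, rfl⟩ := List.mem_ofFn.mp hg
    exact Subgroup.commutator_mem_commutator (Subgroup.mem_top _) (Subgroup.mem_top _)

end Group

theorem isProdOfCommutators_pi_iff {ι : Type*} {G : ι → Type*} [∀ i, Group (G i)] {k : ℕ}
    {f : ∀ i, G i} : IsProdOfCommutators k f ↔ ∀ i, IsProdOfCommutators k (f i) := by
  constructor
  · rintro ⟨a, b, rfl⟩ i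
    exact ⟨fun j => a j i, fun j => b j i, by rw [Pi.list_prod_apply, List.map_ofFn]; rfl⟩
  · intro hf
    choose a b hab using hf
    refine ⟨fun j i => a i j, fun j i => b i j, funext fun i => ?_⟩
    rw [Pi.list_prod_apply, List.map_ofFn]
    exact hab i

section CommLength

variable {G : Type} [Group G]

theorem commLength_le {x : G} {k : ℕ} (hx : IsProdOfCommutators k x) : commLength x ≤ k :=
  Nat.sInf_le hx

theorem isProdOfCommutators_commLength {x : G} (hx : x ∈ commutator G) :
    IsProdOfCommutators (commLength x) x :=
  Nat.sInf_mem (mem_commutator_iff_exists_isProdOfCommutators.mp hx)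

end CommLength

/-- The commutator subgroup of `G^ℕ` consists exactly of the sequences of elements of
`[G,G]` with bounded commutator lengths. -/
theorem stmt_10 (G : Type) [Group G] (h : ℕ → G) :
    h ∈ commutator (∀ _ : ℕ, G) ↔
      ((∀ n : ℕ, h n ∈ commutator G) ∧ ∃ B : ℕ, ∀ n : ℕ, commLength (h n) ≤ B) := by
  rw [mem_commutator_iff_exists_isProdOfCommutators]
  constructor
  · rintro ⟨k, hk⟩
    have hkn := isProdOfCommutators_pi_iff.mp hk
    exact ⟨fun n => mem_commutator_iff_exists_isProdOfCommutators.mpr ⟨k, hkn n⟩, k,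
      fun n => commLength_le (hkn n)⟩
  · rintro ⟨hmem, B, hB⟩
    exact ⟨B, isProdOfCommutators_pi_iff.mpr fun n =>
      (isProdOfCommutators_commLength (hmem n)).mono (hB n)⟩
end

section
/- Let H be an abelian group, p a prime, and λ an ordinal. For every x ∈ p^λ H there exists a family (x_μ), indexed by strictly decreasing finite sequences μ = (μ_1 > ⋯ > μ_n) of ordinals below λ (including the empty sequence), such that: x_∅ = x; each x_μ ∈ p^{min(μ)} H (where min(∅) := λ); and p·x_μ = x_{μ restricted to its first n−1 entries} whenever μ has length n > 0. -/
/-!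
Along a decreasing sequence `μ₁ > ⋯ > μₙ`, each `x_{μ₁…μₖ} ∈ p^{μₖ} H ≤ p^{μₖ₊₁ + 1} H` is
`p` times an element of `p^{μₖ₊₁} H`; choosing such a preimage at every step and folding along
`μ` builds the whole family.
-/

/-- The transfinite `p`-power subgroup `p^λ A`. -/
noncomputable def pPow (p : ℕ) (A : Type) [AddCommGroup A] (lam : Ordinal) : AddSubgroup A :=
  Ordinal.limitRecOn lam ⊤ (fun _ S => S.map (zsmulAddGroupHom (p : ℤ)))
    (fun o _ ih => ⨅ b : Set.Iio o, ih b.1 b.2)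

section pPow

variable (p : ℕ) (A : Type) [AddCommGroup A]

lemma pPow_succ (o : Ordinal) :
    pPow p A (Order.succ o) = (pPow p A o).map (zsmulAddGroupHom (p : ℤ)) := by
  rw [Order.succ_eq_add_one]
  exact Ordinal.limitRecOn_add_one _ _ _ _

lemma pPow_limit {o : Ordinal} (ho : Order.IsSuccLimit o) :
    pPow p A o = ⨅ b : Set.Iio o, pPow p A b.1 :=
  Ordinal.limitRecOn_limit _ _ _ _ ho

lemma pPow_succ_le (o : Ordinal) : pPow p A (Order.succ o) ≤ pPow p A o := by
  rw [pPow_succ]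
  rintro _ ⟨z, hz, rfl⟩
  exact AddSubgroup.zsmul_mem _ hz _

lemma pPow_antitone : Antitone (pPow p A) := by
  intro a b hab
  induction b using Ordinal.limitRecOn with
  | zero => rw [nonpos_iff_eq_zero.mp hab]
  | add_one o ih =>
    rw [← Order.succ_eq_add_one] at hab ⊢
    rcases hab.eq_or_lt with rfl | h
    · exact le_rfl
    · exact (pPow_succ_le p A o).trans (ih (Order.lt_succ_iff.mp h))
  | limit o ho _ =>
    rcases hab.eq_or_lt with rfl | h
    · exact le_rfl
    · rw [pPow_limit p A ho]
      exact iInf_le _ (⟨a, h⟩ : Set.Iio o)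

lemma exists_mem_pPow_nsmul_eq {o : Ordinal} {y : A} (hy : y ∈ pPow p A (Order.succ o)) :
    ∃ z ∈ pPow p A o, p • z = y := by
  rw [pPow_succ] at hy
  obtain ⟨z, hz, rfl⟩ := hy
  exact ⟨z, hz, by simp⟩

end pPow

lemma List.rel_getLast?_getD_of_isChain_concat {α : Type*} {R : α → α → Prop} {l : List α}
    {a d : α} (hl : (l ++ [a]).IsChain R) (hd : R d a) : R (l.getLast?.getD d) a := by
  cases h : l.getLast? with
  | none => exact hd
  | some b => exact (List.isChain_append.mp hl).2.2 b h a rfl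

lemma mem_pPow_succ_of_isChain_concat {p : ℕ} {A : Type} [AddCommGroup A] {lam o : Ordinal}
    {nu : List Ordinal} (hchain : (nu ++ [o]).IsChain (· > ·)) (ho : o < lam) {y : A}
    (hy : y ∈ pPow p A (nu.getLast?.getD lam)) : y ∈ pPow p A (Order.succ o) :=
  pPow_antitone p A
    (Order.succ_le_of_lt (List.rel_getLast?_getD_of_isChain_concat (R := (· > ·)) hchain ho)) hy

lemma foldl_mem_pPow {p : ℕ} {A : Type} [AddCommGroup A] {d : Ordinal → A → A}
    (hd : ∀ o y, y ∈ pPow p A (Order.succ o) → d o y ∈ pPow p A o ∧ p • d o y = y)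
    {lam : Ordinal} {x : A} (hx : x ∈ pPow p A lam) (mu : List Ordinal)
    (hmu : mu.IsChain (· > ·)) (hlam : ∀ o ∈ mu, o < lam) :
    mu.foldl (fun y o => d o y) x ∈ pPow p A (mu.getLast?.getD lam) := by
  induction mu using List.reverseRecOn with
  | nil => exact hx
  | append_singleton nu o ih =>
    have hnu := ih hmu.left_of_append fun b hb => hlam b (by simp [hb])
    rw [List.foldl_concat, List.getLast?_concat]
    exact (hd o _ (mem_pPow_succ_of_isChain_concat hmu (hlam o (by simp)) hnu)).1

theorem stmt_12_general (H : Type) [AddCommGroup H] (p : ℕ)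
    (lam : Ordinal) (x : H) (hx : x ∈ pPow p H lam) :
    ∃ f : List Ordinal → H,
      f [] = x ∧
      ∀ mu : List Ordinal, mu.Chain' (· > ·) → (∀ o ∈ mu, o < lam) →
        f mu ∈ pPow p H (mu.getLast?.getD lam) ∧
        (mu ≠ [] → p • f mu = f mu.dropLast) := by
  choose! d hd using fun o (y : H) => exists_mem_pPow_nsmul_eq p H (o := o) (y := y)
  refine ⟨fun mu => mu.foldl (fun y o => d o y) x, rfl, fun mu hmu hlam => ⟨?_, fun hne => ?_⟩⟩
  · exact foldl_mem_pPow hd hx mu hmu hlam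
  · obtain ⟨nu, o, rfl⟩ := (List.eq_nil_or_concat' mu).resolve_left hne
    have hnu := foldl_mem_pPow hd hx nu hmu.left_of_append fun b hb => hlam b (by simp [hb])
    simp only [List.foldl_concat, List.dropLast_concat]
    exact (hd o _ (mem_pPow_succ_of_isChain_concat hmu (hlam o (by simp)) hnu)).2

/-- For `x ∈ p^λ H` there is a family `(x_μ)`, indexed by finite strictly decreasing
sequences `μ` of ordinals below `λ` (encoded as lists, with `min ∅ = λ` and `min μ` the
last entry), with `x_∅ = x`, `x_μ ∈ p^{min μ} H`, and `p • x_μ = x_{μ.dropLast}`. -/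
theorem stmt_12 (H : Type) [AddCommGroup H] (p : ℕ) (hp : p.Prime)
    (lam : Ordinal) (x : H) (hx : x ∈ pPow p H lam) :
    ∃ f : List Ordinal → H,
      f [] = x ∧
      ∀ mu : List Ordinal, mu.Chain' (· > ·) → (∀ o ∈ mu, o < lam) →
        f mu ∈ pPow p H (mu.getLast?.getD lam) ∧
        (mu ≠ [] → p • f mu = f mu.dropLast) :=
  stmt_12_general H p lam x hx
end

section
/- For a short exact sequence 0 → G₁ → G₂ → G₃ → 0 of towers of abelian groups indexed by ℕ, there is a six-term exact sequence 0 → lim G₁ → lim G₂ → lim G₃ → lim¹ G₁ → lim¹ G₂ → lim¹ G₃ → 0 of abelian groups. -/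
/-!
The maps `∂` form an endomorphism of the short exact sequence `0 → ∏ Aₙ → ∏ Bₙ → ∏ Cₙ → 0`
(products of short exact sequences of abelian groups are short exact). Since `lim` and `lim¹`
are the kernel and the cokernel of `∂`, the six-term sequence is the kernel–cokernel sequence of
the snake lemma.
-/

/-- The limit of a tower of abelian groups, as a subgroup of the product. -/
def addTowerLimit (A : ℕ → Type) [∀ n, AddCommGroup (A n)] (a : ∀ n, A (n + 1) →+ A n) :
    AddSubgroup (∀ n, A n) where
  carrier := {x | ∀ n, a n (x (n + 1)) = x n}
  zero_mem' := by intro n; simp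
  add_mem' := by intro u v hu hv n; simp [hu n, hv n]
  neg_mem' := by intro u hu n; simp [hu n]

/-- The map `∂ : ∏ₙ Aₙ → ∏ₙ Aₙ`, `(x_n) ↦ (x_n − a_{n+1}(x_{n+1}))`, whose kernel and
cokernel are `lim` and `lim¹` of the tower. -/
def delT (A : ℕ → Type) [∀ n, AddCommGroup (A n)] (a : ∀ n, A (n + 1) →+ A n) :
    (∀ n, A n) →+ (∀ n, A n) :=
  AddMonoidHom.mk' (fun x n => x n - a n (x (n + 1))) (by
    intro u v; funext n; simp; abel)

/-- The coordinatewise map on products induced by a map of towers. -/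
def piMap {A B : ℕ → Type} [∀ n, AddCommGroup (A n)] [∀ n, AddCommGroup (B n)]
    (f : ∀ n, A n →+ B n) : (∀ n, A n) →+ (∀ n, B n) :=
  AddMonoidHom.mk' (fun x n => f n (x n)) (by intro u v; funext n; simp)

/-- The map `lim A → lim B` induced by a map of towers. -/
def limMap {A B : ℕ → Type} [∀ n, AddCommGroup (A n)] [∀ n, AddCommGroup (B n)]
    (a : ∀ n, A (n + 1) →+ A n) (b : ∀ n, B (n + 1) →+ B n)
    (f : ∀ n, A n →+ B n) (hf : ∀ n x, b n (f (n + 1) x) = f n (a n x)) :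
    addTowerLimit A a →+ addTowerLimit B b :=
  AddMonoidHom.mk'
    (fun x => ⟨fun n => f n (x.1 n), fun n => by rw [hf n, x.2 n]⟩)
    (by intro u v; exact Subtype.ext (funext fun n => map_add (f n) _ _))

/-- The map `lim¹ A → lim¹ B` induced by a map of towers. -/
def lim1Map {A B : ℕ → Type} [∀ n, AddCommGroup (A n)] [∀ n, AddCommGroup (B n)]
    (a : ∀ n, A (n + 1) →+ A n) (b : ∀ n, B (n + 1) →+ B n)
    (f : ∀ n, A n →+ B n) (hf : ∀ n x, b n (f (n + 1) x) = f n (a n x)) :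
    ((∀ n, A n) ⧸ (delT A a).range) →+ ((∀ n, B n) ⧸ (delT B b).range) :=
  QuotientAddGroup.map _ _ (piMap f) (by
    rintro x ⟨y, rfl⟩
    exact ⟨piMap f y, by funext n; simp [delT, piMap, hf n, map_sub]⟩)

open Function

section KernelCokernel

variable {M₁ M₂ M₃ N₁ N₂ N₃ K₁ K₂ K₃ C₁ C₂ C₃ : Type*}
  [AddCommGroup M₁] [AddCommGroup M₂] [AddCommGroup M₃]
  [AddCommGroup N₁] [AddCommGroup N₂] [AddCommGroup N₃]
  [AddCommGroup K₁] [AddCommGroup K₂] [AddCommGroup K₃]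
  [AddCommGroup C₁] [AddCommGroup C₂] [AddCommGroup C₃]
  {f₁ : M₁ →+ M₂} {f₂ : M₂ →+ M₃} {g₁ : N₁ →+ N₂} {g₂ : N₂ →+ N₃}
  {i₁ : M₁ →+ N₁} {i₂ : M₂ →+ N₂} {i₃ : M₃ →+ N₃}
  {ι₁ : K₁ →+ M₁} {ι₂ : K₂ →+ M₂} {ι₃ : K₃ →+ M₃}
  {π₁ : N₁ →+ C₁} {π₂ : N₂ →+ C₂} {π₃ : N₃ →+ C₃}
  {F₁ : K₁ →+ K₂} {F₂ : K₂ →+ K₃} {G₁ : C₁ →+ C₂} {G₂ : C₂ →+ C₃}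

theorem exact_map_kernels (hf : Exact f₁ f₂) (hg₁ : Injective g₁)
    (h₁ : ∀ x, g₁ (i₁ x) = i₂ (f₁ x)) (hι₁ : Exact ι₁ i₁) (hι₂ : Exact ι₂ i₂)
    (hι₂_inj : Injective ι₂) (hι₃_inj : Injective ι₃)
    (hF₁ : ∀ k, f₁ (ι₁ k) = ι₂ (F₁ k)) (hF₂ : ∀ k, f₂ (ι₂ k) = ι₃ (F₂ k)) :
    Exact F₁ F₂ := by
  intro k
  constructor
  · intro hk
    obtain ⟨m, hm⟩ := (hf (ι₂ k)).1 (by rw [hF₂, hk, map_zero])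
    obtain ⟨k', rfl⟩ := (hι₁ m).1 <| hg₁ <| by
      rw [h₁, hm, hι₂.apply_apply_eq_zero, map_zero]
    exact ⟨k', hι₂_inj (by rw [← hF₁, hm])⟩
  · rintro ⟨k', rfl⟩
    apply hι₃_inj
    rw [← hF₂, ← hF₁, hf.apply_apply_eq_zero, map_zero]

theorem exact_map_cokernels (hf₂ : Surjective f₂) (hg : Exact g₁ g₂)
    (h₂ : ∀ x, g₂ (i₂ x) = i₃ (f₂ x)) (hπ₂ : Exact i₂ π₂) (hπ₃ : Exact i₃ π₃)
    (hπ₁_surj : Surjective π₁) (hπ₂_surj : Surjective π₂)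
    (hG₁ : ∀ n, G₁ (π₁ n) = π₂ (g₁ n)) (hG₂ : ∀ n, G₂ (π₂ n) = π₃ (g₂ n)) :
    Exact G₁ G₂ := by
  intro c
  obtain ⟨n, rfl⟩ := hπ₂_surj c
  constructor
  · intro hn
    obtain ⟨m₃, hm₃⟩ := (hπ₃ (g₂ n)).1 (by rw [← hG₂, hn])
    obtain ⟨m₂, rfl⟩ := hf₂ m₃
    obtain ⟨n₁, hn₁⟩ := (hg (n - i₂ m₂)).1 (by rw [map_sub, h₂, hm₃, sub_self])
    refine ⟨π₁ n₁, ?_⟩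
    rw [hG₁, hn₁, map_sub, hπ₂.apply_apply_eq_zero, sub_zero]
  · rintro ⟨c₁, hc₁⟩
    obtain ⟨n₁, rfl⟩ := hπ₁_surj c₁
    rw [← hc₁, hG₁, hG₂, hg.apply_apply_eq_zero, map_zero]

theorem exists_connecting_hom (hf : Exact f₁ f₂) (hf₂ : Surjective f₂)
    (hg : Exact g₁ g₂) (hg₁ : Injective g₁)
    (h₁ : ∀ x, g₁ (i₁ x) = i₂ (f₁ x)) (h₂ : ∀ x, g₂ (i₂ x) = i₃ (f₂ x))
    (hι₂ : Exact ι₂ i₂) (hι₃ : Exact ι₃ i₃) (hι₃_inj : Injective ι₃)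
    (hπ₁ : Exact i₁ π₁) (hπ₂ : Exact i₂ π₂) (hπ₁_surj : Surjective π₁)
    (hF₂ : ∀ k, f₂ (ι₂ k) = ι₃ (F₂ k)) (hG₁ : ∀ n, G₁ (π₁ n) = π₂ (g₁ n)) :
    ∃ δ : K₃ →+ C₁, Exact F₂ δ ∧ Exact δ G₁ := by
  have H₁ : g₁.toIntLinearMap ∘ₗ i₁.toIntLinearMap = i₂.toIntLinearMap ∘ₗ f₁.toIntLinearMap :=
    LinearMap.ext h₁
  have H₂ : g₂.toIntLinearMap ∘ₗ i₂.toIntLinearMap = i₃.toIntLinearMap ∘ₗ f₂.toIntLinearMap :=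
    LinearMap.ext h₂
  let δ := SnakeLemma.δ' i₁.toIntLinearMap i₂.toIntLinearMap i₃.toIntLinearMap _ _ hf _ _ hg H₁ H₂
    ι₃.toIntLinearMap hι₃ π₁.toIntLinearMap hπ₁ hf₂ hg₁
  exact ⟨δ.toAddMonoidHom,
    SnakeLemma.exact_δ'_right _ _ _ _ _ hf _ _ hg H₁ H₂ ι₂.toIntLinearMap hι₂ ι₃.toIntLinearMap hι₃
      π₁.toIntLinearMap hπ₁ hf₂ hg₁ F₂.toIntLinearMap (LinearMap.ext hF₂) hι₃_inj,
    SnakeLemma.exact_δ'_left _ _ _ _ _ hf _ _ hg H₁ H₂ ι₃.toIntLinearMap hι₃ π₁.toIntLinearMap hπ₁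
      π₂.toIntLinearMap hπ₂ hf₂ hg₁ G₁.toIntLinearMap (LinearMap.ext hG₁) hπ₁_surj⟩

end KernelCokernel

theorem exact_mk'_range {M N : Type*} [AddCommGroup M] [AddCommGroup N] (φ : M →+ N) :
    Exact φ (QuotientAddGroup.mk' φ.range) :=
  fun _ => QuotientAddGroup.eq_zero_iff _

section Tower

variable {A B C : ℕ → Type} [∀ n, AddCommGroup (A n)] [∀ n, AddCommGroup (B n)]
  [∀ n, AddCommGroup (C n)]

theorem exact_piMap {f : ∀ n, A n →+ B n} {g : ∀ n, B n →+ C n} (hfg : ∀ n, Exact (f n) (g n)) :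
    Exact (piMap f) (piMap g) := fun y => by
  refine ⟨fun hy => ?_, ?_⟩
  · choose x hx using fun n => (hfg n (y n)).1 (congrFun hy n)
    exact ⟨x, funext hx⟩
  · rintro ⟨x, rfl⟩
    exact funext fun n => (hfg n).apply_apply_eq_zero (x n)

theorem piMap_delT {a : ∀ n, A (n + 1) →+ A n} {b : ∀ n, B (n + 1) →+ B n}
    {f : ∀ n, A n →+ B n} (hf : ∀ n x, b n (f (n + 1) x) = f n (a n x)) (x : ∀ n, A n) :
    piMap f (delT A a x) = delT B b (piMap f x) := by
  funext n
  simp [delT, piMap, hf]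

theorem exact_subtype_delT (a : ∀ n, A (n + 1) →+ A n) :
    Exact (addTowerLimit A a).subtype (delT A a) := fun x => by
  rw [AddSubgroup.coe_subtype, Subtype.range_coe_subtype, funext_iff]
  exact forall_congr' fun n => sub_eq_zero.trans eq_comm

end Tower

/-- For a levelwise short exact sequence of towers of abelian groups
`0 → A → B → C → 0`, there is a six-term exact sequence
`0 → lim A → lim B → lim C → lim¹ A → lim¹ B → lim¹ C → 0`,
whose maps (other than the connecting map) are the induced ones. -/
theorem stmt_19 (A B C : ℕ → Type)
    [∀ n, AddCommGroup (A n)] [∀ n, AddCommGroup (B n)] [∀ n, AddCommGroup (C n)]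
    (a : ∀ n, A (n + 1) →+ A n) (b : ∀ n, B (n + 1) →+ B n) (c : ∀ n, C (n + 1) →+ C n)
    (f : ∀ n, A n →+ B n) (g : ∀ n, B n →+ C n)
    (hfa : ∀ n x, b n (f (n + 1) x) = f n (a n x))
    (hgb : ∀ n x, c n (g (n + 1) x) = g n (b n x))
    (hinj : ∀ n, Function.Injective (f n))
    (hsurj : ∀ n, Function.Surjective (g n))
    (hex : ∀ n, (f n).range = (g n).ker) :
    ∃ delta : addTowerLimit C c →+ ((∀ n, A n) ⧸ (delT A a).range),
      Function.Injective (limMap a b f hfa) ∧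
      Function.Exact (limMap a b f hfa) (limMap b c g hgb) ∧
      Function.Exact (limMap b c g hgb) delta ∧
      Function.Exact delta (lim1Map a b f hfa) ∧
      Function.Exact (lim1Map a b f hfa) (lim1Map b c g hgb) ∧
      Function.Surjective (lim1Map b c g hgb) := by
  have hfg n : Exact (f n) (g n) := AddMonoidHom.exact_iff.mpr (hex n).symm
  have hprod : Exact (piMap f) (piMap g) := exact_piMap hfg
  have hprod_inj : Injective (piMap f) := Injective.piMap hinj
  have hprod_surj : Surjective (piMap g) := Surjective.piMap hsurj
  obtain ⟨δ, hlim_δ, hδ_lim1⟩ := exists_connecting_hom hprod hprod_surj hprod hprod_inj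
    (piMap_delT hfa) (piMap_delT hgb) (exact_subtype_delT b) (exact_subtype_delT c)
    (addTowerLimit C c).subtype_injective (exact_mk'_range _) (exact_mk'_range _)
    (QuotientAddGroup.mk'_surjective _) (F₂ := limMap b c g hgb) (fun _ => rfl)
    (G₁ := lim1Map a b f hfa) (fun _ => rfl)
  refine ⟨δ, ?_, ?_, hlim_δ, hδ_lim1, ?_, ?_⟩
  · exact Injective.of_comp (f := Subtype.val) (hprod_inj.comp Subtype.val_injective)
  · exact exact_map_kernels hprod hprod_inj (piMap_delT hfa) (exact_subtype_delT a)
      (exact_subtype_delT b) (addTowerLimit B b).subtype_injective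
      (addTowerLimit C c).subtype_injective (fun _ => rfl) (fun _ => rfl)
  · exact exact_map_cokernels hprod_surj hprod (piMap_delT hgb) (exact_mk'_range _)
      (exact_mk'_range _) (QuotientAddGroup.mk'_surjective _) (QuotientAddGroup.mk'_surjective _)
      (fun _ => rfl) (fun _ => rfl)
  · exact Surjective.of_comp (g := QuotientAddGroup.mk' _)
      ((QuotientAddGroup.mk'_surjective _).comp hprod_surj)
end
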